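/- arXiv:1102.5022 — 7 statements merged into one kernel-verified Lean document; each statement's English description precedes it below -/
import Mathlib

section
/- Let A be a commutative ring and let P^• = (0 → P^0 → P^1 → ⋯ → P^n → 0) be a bounded cochain complex of finitely generated projective A-modules. Let P_• = Hom_A(P^•, A) be the chain complex obtained by applying the A-linear dual termwise (so P_q = Hom_A(P^q, A), with boundary maps dual to the coboundary maps). Then the following are equivalent: (1) H^j(P^•) = 0 for all j ≠ n, and H^n(P^•) is a finitely generated projective A-module; (2) H_j(P_•) = 0 for all j ≠ n. -/
/-!
Call `f` inner-invertible if `f ∘ g ∘ f = f` for some `g`. If `A →f B →g C` is exact at a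
projective `B` and `g ∘ g' ∘ g = g`, then `id - g' ∘ g` maps `B` into `ker g = im f`, so it lifts
through `f`, giving a contraction `f ∘ s + g' ∘ g = id` at `B`; when `g ∘ f = 0` this makes `f`
inner-invertible. Contractions dualize, and for finitely generated projective modules they are
recovered from their duals through the double-dual isomorphism.

Projectivity of `H^n = P^n / im d^{n-1}` says exactly that `d^{n-1}` is inner-invertible, and
`H_0 = 0` says that `d^{0*}` is onto the projective `P_0`, hence inner-invertible. Descending
induction along `P^•`, resp. ascending induction along `P_•`, contracts the complex in all
degrees below `n`, and dualizing the contractions transfers exactness to the other side.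
-/

namespace CochainCx

variable (R : Type) [CommRing R] (P : ℕ → Type)
  [∀ i, AddCommGroup (P i)] [∀ i, Module R (P i)]
  (d : ∀ i, P i →ₗ[R] P (i + 1))

/-- The cohomology of the cochain complex `P⁰ → P¹ → ⋯` (with differentials `d`):
`H⁰ = ker d⁰` and `H^{j+1} = ker d^{j+1} / (im d^j ∩ ker d^{j+1})`, which is the usual
cohomology `ker/im` whenever `d ∘ d = 0`. -/
noncomputable def cohomology : ℕ → Type
  | 0 => ↥(LinearMap.ker (d 0))
  | (j + 1) => ↥(LinearMap.ker (d (j + 1))) ⧸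
      Submodule.comap (LinearMap.ker (d (j + 1))).subtype (LinearMap.range (d j))

noncomputable instance : ∀ j, AddCommGroup (cohomology R P d j)
  | 0 => inferInstanceAs (AddCommGroup ↥(LinearMap.ker (d 0)))
  | (j + 1) => inferInstanceAs (AddCommGroup (↥(LinearMap.ker (d (j + 1))) ⧸
      Submodule.comap (LinearMap.ker (d (j + 1))).subtype (LinearMap.range (d j))))

noncomputable instance : ∀ j, Module R (cohomology R P d j)
  | 0 => inferInstanceAs (Module R ↥(LinearMap.ker (d 0)))
  | (j + 1) => inferInstanceAs (Module R (↥(LinearMap.ker (d (j + 1))) ⧸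
      Submodule.comap (LinearMap.ker (d (j + 1))).subtype (LinearMap.range (d j))))

/-- The homology of the `R`-linear dual chain complex `P_• = Hom_R(P^•, R)`, whose
`j`-th term is `P j →ₗ[R] R` and whose differentials `(P (j+1) →ₗ[R] R) → (P j →ₗ[R] R)`
are the duals `φ ↦ φ ∘ d j` of the coboundaries:
`H_0 = coker` of the dual of `d 0`, and `H_{j+1} = ker/(im ∩ ker)`, which is the usual
homology `ker/im` whenever `d ∘ d = 0`. -/
noncomputable def dualHomology : ℕ → Type
  | 0 => (P 0 →ₗ[R] R) ⧸ LinearMap.range (LinearMap.lcomp R R (d 0))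
  | (j + 1) => @HasQuotient.Quotient ↥(LinearMap.ker (LinearMap.lcomp R R (d j))) _
      (@Submodule.hasQuotient R _ _ (Submodule.addCommGroup _) _)
      (Submodule.comap (LinearMap.ker (LinearMap.lcomp R R (d j))).subtype
        (LinearMap.range (LinearMap.lcomp R R (d (j + 1)))))

end CochainCx

open Module

namespace LinearMap

section Ring

variable {R : Type*} [Ring R] {A B C : Type*}
  [AddCommGroup A] [Module R A] [AddCommGroup B] [Module R B] [AddCommGroup C] [Module R C]

def HasInnerInverse (f : A →ₗ[R] B) : Prop :=
  ∃ g : B →ₗ[R] A, f ∘ₗ g ∘ₗ f = f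

def IsContractibleAt (f : A →ₗ[R] B) (g : B →ₗ[R] C) : Prop :=
  ∃ (s : B →ₗ[R] A) (s' : C →ₗ[R] B), f ∘ₗ s + s' ∘ₗ g = LinearMap.id

theorem exists_comp_eq_of_range_le [Projective R C] (f : A →ₗ[R] B) (u : C →ₗ[R] B)
    (h : range u ≤ range f) : ∃ t : C →ₗ[R] A, f ∘ₗ t = u := by
  obtain ⟨t, ht⟩ := projective_lifting_property f.rangeRestrict
    (u.codRestrict (range f) fun x => h (mem_range_self u x)) f.surjective_rangeRestrict
  exact ⟨t, ext fun x => congrArg Subtype.val (DFunLike.congr_fun ht x)⟩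

theorem hasInnerInverse_of_surjective [Projective R B] {f : A →ₗ[R] B}
    (hf : Function.Surjective f) : f.HasInnerInverse := by
  obtain ⟨g, hg⟩ := f.exists_rightInverse_of_surjective (range_eq_top_of_surjective f hf)
  exact ⟨g, by rw [← comp_assoc, hg, id_comp]⟩

theorem hasInnerInverse_of_projective_quotient [Projective R B] {f : A →ₗ[R] B}
    [Projective R (B ⧸ range f)] : f.HasInnerInverse := by
  obtain ⟨σ, hσ⟩ := (range f).mkQ.exists_rightInverse_of_surjective (Submodule.range_mkQ _)
  have hle : range (LinearMap.id - σ ∘ₗ (range f).mkQ) ≤ range f := by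
    rintro _ ⟨x, rfl⟩
    rw [← Submodule.Quotient.mk_eq_zero, ← Submodule.mkQ_apply]
    simpa using sub_eq_zero.mpr (DFunLike.congr_fun hσ (Submodule.Quotient.mk x)).symm
  obtain ⟨t, ht⟩ := exists_comp_eq_of_range_le f _ hle
  refine ⟨t, ext fun x => ?_⟩
  have hfx : Submodule.Quotient.mk (p := range f) (f x) = 0 :=
    (Submodule.Quotient.mk_eq_zero _).mpr (mem_range_self f x)
  simpa [hfx] using DFunLike.congr_fun ht (f x)

theorem HasInnerInverse.projective_quotient [Projective R B] {f : A →ₗ[R] B}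
    (hf : f.HasInnerInverse) : Projective R (B ⧸ range f) := by
  obtain ⟨g, hg⟩ := hf
  have hker : range f ≤ ker (LinearMap.id - f ∘ₗ g) := by
    rintro _ ⟨x, rfl⟩
    simpa [sub_eq_zero] using (DFunLike.congr_fun hg x).symm
  refine .of_split ((range f).liftQ _ hker) (range f).mkQ (Submodule.linearMap_qext _ ?_)
  ext x
  simp

theorem HasInnerInverse.exists_leftInverse {f : A →ₗ[R] B} (hf : f.HasInnerInverse)
    (hinj : Function.Injective f) : ∃ t : B →ₗ[R] A, t ∘ₗ f = LinearMap.id := by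
  obtain ⟨g, hg⟩ := hf
  exact ⟨g, ext fun x => hinj (DFunLike.congr_fun hg x)⟩

theorem IsContractibleAt.ker_le_range {f : A →ₗ[R] B} {g : B →ₗ[R] C}
    (h : IsContractibleAt f g) : ker g ≤ range f := by
  obtain ⟨s, s', hs⟩ := h
  intro x hx
  refine ⟨s x, ?_⟩
  simpa [mem_ker.mp hx] using DFunLike.congr_fun hs x

theorem IsContractibleAt.hasInnerInverse_left {f : A →ₗ[R] B} {g : B →ₗ[R] C}
    (h : IsContractibleAt f g) (hgf : g ∘ₗ f = 0) : f.HasInnerInverse := by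
  obtain ⟨s, s', hs⟩ := h
  refine ⟨s, ext fun x => ?_⟩
  have hgfx : g (f x) = 0 := by simpa using DFunLike.congr_fun hgf x
  simpa [hgfx] using DFunLike.congr_fun hs (f x)

theorem isContractibleAt_of_ker_le_range [Projective R B] {f : A →ₗ[R] B} {g : B →ₗ[R] C}
    (hex : ker g ≤ range f) (hg : g.HasInnerInverse) : IsContractibleAt f g := by
  obtain ⟨s', hs'⟩ := hg
  have hle : range (LinearMap.id - s' ∘ₗ g) ≤ range f := by
    rintro _ ⟨x, rfl⟩
    apply hex
    simpa [sub_eq_zero] using (DFunLike.congr_fun hs' x).symm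
  obtain ⟨s, hs⟩ := exists_comp_eq_of_range_le f _ hle
  exact ⟨s, s', by rw [hs, sub_add_cancel]⟩

theorem HasInnerInverse.of_comp_equiv {A' B' : Type*} [AddCommGroup A'] [Module R A']
    [AddCommGroup B'] [Module R B'] (eA : A ≃ₗ[R] A') (eB : B ≃ₗ[R] B') {f : A →ₗ[R] B}
    (hf : (eB.toLinearMap ∘ₗ f ∘ₗ eA.symm.toLinearMap).HasInnerInverse) :
    f.HasInnerInverse := by
  obtain ⟨g, hg⟩ := hf
  refine ⟨eA.symm.toLinearMap ∘ₗ g ∘ₗ eB.toLinearMap, ext fun x => eB.injective ?_⟩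
  simpa using DFunLike.congr_fun hg (eA x)

theorem IsContractibleAt.of_comp_equiv {A' B' C' : Type*} [AddCommGroup A'] [Module R A']
    [AddCommGroup B'] [Module R B'] [AddCommGroup C'] [Module R C']
    (eA : A ≃ₗ[R] A') (eB : B ≃ₗ[R] B') (eC : C ≃ₗ[R] C') {f : A →ₗ[R] B} {g : B →ₗ[R] C}
    (h : IsContractibleAt (eB.toLinearMap ∘ₗ f ∘ₗ eA.symm.toLinearMap)
      (eC.toLinearMap ∘ₗ g ∘ₗ eB.symm.toLinearMap)) :
    IsContractibleAt f g := by
  obtain ⟨s, s', hs⟩ := h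
  refine ⟨eA.symm.toLinearMap ∘ₗ s ∘ₗ eB.toLinearMap,
    eB.symm.toLinearMap ∘ₗ s' ∘ₗ eC.toLinearMap, ext fun x => eB.injective ?_⟩
  simpa using DFunLike.congr_fun hs (eB x)

end Ring

section Dual

variable {R : Type*} [CommRing R] {A B C : Type*}
  [AddCommGroup A] [Module R A] [AddCommGroup B] [Module R B] [AddCommGroup C] [Module R C]

theorem dualMap_add (f g : A →ₗ[R] B) : (f + g).dualMap = f.dualMap + g.dualMap :=
  map_add Dual.transpose f g

theorem dualMap_comp_eq_zero {f : A →ₗ[R] B} {g : B →ₗ[R] C} (hgf : g ∘ₗ f = 0) :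
    f.dualMap ∘ₗ g.dualMap = 0 := by
  rw [dualMap_comp_dualMap, hgf]
  exact map_zero Dual.transpose

theorem HasInnerInverse.dualMap {f : A →ₗ[R] B} (hf : f.HasInnerInverse) :
    f.dualMap.HasInnerInverse := by
  obtain ⟨g, hg⟩ := hf
  exact ⟨g.dualMap, by rw [dualMap_comp_dualMap, dualMap_comp_dualMap, comp_assoc, hg]⟩

theorem IsContractibleAt.dualMap {f : A →ₗ[R] B} {g : B →ₗ[R] C} (h : IsContractibleAt f g) :
    IsContractibleAt g.dualMap f.dualMap := by
  obtain ⟨s, s', hs⟩ := h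
  refine ⟨s'.dualMap, s.dualMap, ?_⟩
  rw [dualMap_comp_dualMap, dualMap_comp_dualMap, add_comm, ← dualMap_add, hs, dualMap_id]

theorem dualMap_dualMap_eq_comp_equiv [IsReflexive R A] [IsReflexive R B] (f : A →ₗ[R] B) :
    f.dualMap.dualMap =
      (evalEquiv R B).toLinearMap ∘ₗ f ∘ₗ (evalEquiv R A).symm.toLinearMap := by
  rw [evalEquiv_toLinearMap, Dual.eval_comp_comp_evalEquiv_eq]

theorem hasInnerInverse_dualMap_iff [IsReflexive R A] [IsReflexive R B] {f : A →ₗ[R] B} :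
    f.dualMap.HasInnerInverse ↔ f.HasInnerInverse := by
  refine ⟨fun hf => .of_comp_equiv (evalEquiv R A) (evalEquiv R B) ?_, .dualMap⟩
  rw [← dualMap_dualMap_eq_comp_equiv]
  exact hf.dualMap

theorem isContractibleAt_dualMap_iff [IsReflexive R A] [IsReflexive R B] [IsReflexive R C]
    {f : A →ₗ[R] B} {g : B →ₗ[R] C} :
    IsContractibleAt g.dualMap f.dualMap ↔ IsContractibleAt f g := by
  refine ⟨fun h => .of_comp_equiv (evalEquiv R A) (evalEquiv R B) (evalEquiv R C) ?_, .dualMap⟩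
  rw [← dualMap_dualMap_eq_comp_equiv, ← dualMap_dualMap_eq_comp_equiv]
  exact h.dualMap

theorem injective_of_surjective_dualMap [IsReflexive R A] {f : A →ₗ[R] B}
    (hf : Function.Surjective f.dualMap) : Function.Injective f := by
  refine (injective_iff_map_eq_zero f).mpr fun x hx => (bijective_dual_eval R A).injective ?_
  ext φ
  obtain ⟨ψ, rfl⟩ := hf φ
  simp [hx]

theorem surjective_dualMap_of_leftInverse {f : A →ₗ[R] B} {t : B →ₗ[R] A}
    (ht : t ∘ₗ f = LinearMap.id) : Function.Surjective f.dualMap := fun φ =>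
  ⟨t.dualMap φ, by rw [← comp_apply, dualMap_comp_dualMap, ht, dualMap_id, id_apply]⟩

end Dual

end LinearMap

namespace CochainCx

open LinearMap

variable {R : Type} [CommRing R] {P : ℕ → Type} [∀ i, AddCommGroup (P i)] [∀ i, Module R (P i)]
  (d : ∀ i, P i →ₗ[R] P (i + 1))

theorem subsingleton_cohomology_zero_iff :
    Subsingleton (cohomology R P d 0) ↔ Function.Injective (d 0) :=
  Submodule.subsingleton_iff_eq_bot.trans ker_eq_bot

theorem subsingleton_cohomology_succ_iff (j : ℕ) :
    Subsingleton (cohomology R P d (j + 1)) ↔ ker (d (j + 1)) ≤ range (d j) :=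
  Submodule.Quotient.subsingleton_iff.trans Submodule.comap_subtype_eq_top

theorem subsingleton_dualHomology_zero_iff :
    Subsingleton (dualHomology R P d 0) ↔ Function.Surjective (d 0).dualMap :=
  Submodule.Quotient.subsingleton_iff.trans range_eq_top

theorem subsingleton_dualHomology_succ_iff (j : ℕ) :
    Subsingleton (dualHomology R P d (j + 1)) ↔
      ker (d j).dualMap ≤ range (d (j + 1)).dualMap :=
  Submodule.Quotient.subsingleton_iff.trans Submodule.comap_subtype_eq_top

theorem subsingleton_cohomology_of_lt {n j : ℕ} (hbound : ∀ i, n < i → Subsingleton (P i))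
    (hj : n < j) : Subsingleton (cohomology R P d j) := by
  obtain ⟨k, rfl⟩ := Nat.exists_eq_add_of_lt hj
  have := hbound _ hj
  exact (subsingleton_cohomology_succ_iff d _).mpr fun x _ => Subsingleton.elim x 0 ▸ zero_mem _

theorem subsingleton_dualHomology_of_lt {n j : ℕ} (hbound : ∀ i, n < i → Subsingleton (P i))
    (hj : n < j) : Subsingleton (dualHomology R P d j) := by
  obtain ⟨k, rfl⟩ := Nat.exists_eq_add_of_lt hj
  have := hbound _ hj
  exact (subsingleton_dualHomology_succ_iff d _).mpr fun x _ => Subsingleton.elim x 0 ▸ zero_mem _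

noncomputable def cohomologyZeroEquiv [Subsingleton (P 1)] : cohomology R P d 0 ≃ₗ[R] P 0 :=
  LinearEquiv.ofTop _ (ker_eq_top.mpr (Subsingleton.elim _ _))

noncomputable def cohomologySuccEquiv (j : ℕ) [Subsingleton (P (j + 2))] :
    cohomology R P d (j + 1) ≃ₗ[R] P (j + 1) ⧸ range (d j) :=
  Submodule.Quotient.equiv _ _ (LinearEquiv.ofTop _ (ker_eq_top.mpr (Subsingleton.elim _ _))) (by
    ext x
    simpa using fun _ _ => Subsingleton.elim _ _)

theorem forall_ne_subsingleton_cohomology_iff {m : ℕ}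
    (hbound : ∀ i, m + 1 < i → Subsingleton (P i)) :
    (∀ j, j ≠ m + 1 → Subsingleton (cohomology R P d j)) ↔
      Function.Injective (d 0) ∧ ∀ j < m, ker (d (j + 1)) ≤ range (d j) := by
  refine ⟨fun h => ⟨(subsingleton_cohomology_zero_iff d).mp (h 0 (by omega)),
    fun j hj => (subsingleton_cohomology_succ_iff d j).mp (h (j + 1) (by omega))⟩, ?_⟩
  rintro ⟨hinj, hex⟩ (_ | j) hj
  · exact (subsingleton_cohomology_zero_iff d).mpr hinj
  · obtain hjm | hmj := lt_or_gt_of_ne (show j ≠ m by omega)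
    · exact (subsingleton_cohomology_succ_iff d j).mpr (hex j hjm)
    · exact subsingleton_cohomology_of_lt d hbound (by omega)

theorem forall_ne_subsingleton_dualHomology_iff {m : ℕ}
    (hbound : ∀ i, m + 1 < i → Subsingleton (P i)) :
    (∀ j, j ≠ m + 1 → Subsingleton (dualHomology R P d j)) ↔
      Function.Surjective (d 0).dualMap ∧
        ∀ j < m, ker (d j).dualMap ≤ range (d (j + 1)).dualMap := by
  refine ⟨fun h => ⟨(subsingleton_dualHomology_zero_iff d).mp (h 0 (by omega)),
    fun j hj => (subsingleton_dualHomology_succ_iff d j).mp (h (j + 1) (by omega))⟩, ?_⟩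
  rintro ⟨hsurj, hex⟩ (_ | j) hj
  · exact (subsingleton_dualHomology_zero_iff d).mpr hsurj
  · obtain hjm | hmj := lt_or_gt_of_ne (show j ≠ m by omega)
    · exact (subsingleton_dualHomology_succ_iff d j).mpr (hex j hjm)
    · exact subsingleton_dualHomology_of_lt d hbound (by omega)

theorem finite_cohomology_succ [∀ i, Module.Finite R (P i)] (j : ℕ)
    [Subsingleton (P (j + 2))] :
    Module.Finite R (cohomology R P d (j + 1)) :=
  .equiv (cohomologySuccEquiv d j).symm

theorem projective_cohomology_succ_iff [∀ i, Projective R (P i)] (j : ℕ)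
    [Subsingleton (P (j + 2))] :
    Projective R (cohomology R P d (j + 1)) ↔ (d j).HasInnerInverse :=
  ⟨fun _ => have := Projective.of_equiv (cohomologySuccEquiv d j)
      hasInnerInverse_of_projective_quotient,
    fun h => have := h.projective_quotient; .of_equiv (cohomologySuccEquiv d j).symm⟩

variable [∀ i, Projective R (P i)] {d}

theorem hasInnerInverse_of_ker_le_range (hdd : ∀ i, d (i + 1) ∘ₗ d i = 0) {m : ℕ}
    (hex : ∀ j < m, ker (d (j + 1)) ≤ range (d j)) (hm : (d m).HasInnerInverse) {j : ℕ}
    (hj : j ≤ m) : (d j).HasInnerInverse := by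
  induction hj using Nat.decreasingInduction with
  | self => exact hm
  | of_succ k hk ih =>
    exact (isContractibleAt_of_ker_le_range (hex k hk) ih).hasInnerInverse_left (hdd k)

variable [∀ i, Module.Finite R (P i)]

theorem hasInnerInverse_dualMap_of_ker_le_range (hdd : ∀ i, d (i + 1) ∘ₗ d i = 0) {m : ℕ}
    (hex : ∀ j < m, ker (d j).dualMap ≤ range (d (j + 1)).dualMap)
    (h0 : (d 0).dualMap.HasInnerInverse) {j : ℕ} (hj : j ≤ m) :
    (d j).dualMap.HasInnerInverse := by
  induction j with
  | zero => exact h0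
  | succ k ih =>
    exact (isContractibleAt_of_ker_le_range (hex k hj) (ih (by omega))).hasInnerInverse_left
      (dualMap_comp_eq_zero (hdd k))

theorem exact_below_iff_dual_exact_below (hdd : ∀ i, d (i + 1) ∘ₗ d i = 0) {m : ℕ} :
    (Function.Injective (d 0) ∧ (∀ j < m, ker (d (j + 1)) ≤ range (d j)) ∧
        (d m).HasInnerInverse) ↔
      Function.Surjective (d 0).dualMap ∧
        ∀ j < m, ker (d j).dualMap ≤ range (d (j + 1)).dualMap := by
  constructor
  · rintro ⟨hinj, hex, hm⟩
    have hinner := fun j (hj : j ≤ m) => hasInnerInverse_of_ker_le_range hdd hex hm hj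
    obtain ⟨t, ht⟩ := (hinner 0 (Nat.zero_le m)).exists_leftInverse hinj
    refine ⟨surjective_dualMap_of_leftInverse ht, fun j hj => ?_⟩
    exact (isContractibleAt_of_ker_le_range (hex j hj) (hinner (j + 1) hj)).dualMap
      |>.ker_le_range
  · rintro ⟨hsurj, hex⟩
    have hinner := fun j (hj : j ≤ m) => hasInnerInverse_dualMap_of_ker_le_range hdd hex
      (hasInnerInverse_of_surjective hsurj) hj
    refine ⟨injective_of_surjective_dualMap hsurj, fun j hj => ?_,
      hasInnerInverse_dualMap_iff.mp (hinner m le_rfl)⟩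
    exact (isContractibleAt_dualMap_iff.mp
      (isContractibleAt_of_ker_le_range (hex j hj) (hinner j hj.le))).ker_le_range

end CochainCx

open CochainCx in
/-- For a cochain complex `P^•` of finitely generated projective `R`-modules
concentrated in degrees `0,…,n`, the following are equivalent: (1) `H^j(P^•) = 0` for
`j ≠ n` and `H^n(P^•)` is finitely generated projective; (2) the homology of the dual
chain complex `Hom_R(P^•, R)` vanishes in all degrees `j ≠ n`. -/
theorem stmt_1 (R : Type) [CommRing R] (n : ℕ) (P : ℕ → Type)
    [∀ i, AddCommGroup (P i)] [∀ i, Module R (P i)]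
    [∀ i, Module.Finite R (P i)] [∀ i, Module.Projective R (P i)]
    (d : ∀ i, P i →ₗ[R] P (i + 1))
    (hdd : ∀ i, (d (i + 1)).comp (d i) = 0)
    (hbound : ∀ i, n < i → Subsingleton (P i)) :
    ((∀ j, j ≠ n → Subsingleton (cohomology R P d j)) ∧
        Module.Finite R (cohomology R P d n) ∧ Module.Projective R (cohomology R P d n)) ↔
      (∀ j, j ≠ n → Subsingleton (dualHomology R P d j)) := by
  obtain _ | m := n
  · have := hbound 1 one_pos
    refine iff_of_true
      ⟨fun j hj => subsingleton_cohomology_of_lt d hbound (Nat.pos_of_ne_zero hj),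
        .equiv (cohomologyZeroEquiv d).symm, .of_equiv (cohomologyZeroEquiv d).symm⟩
      fun j hj => subsingleton_dualHomology_of_lt d hbound (Nat.pos_of_ne_zero hj)
  · have := hbound (m + 2) (by omega)
    rw [forall_ne_subsingleton_cohomology_iff d hbound,
      forall_ne_subsingleton_dualHomology_iff d hbound, projective_cohomology_succ_iff,
      ← exact_below_iff_dual_exact_below hdd]
    simp only [finite_cohomology_succ, true_and, and_assoc]
end

section
/- Let p be a prime and let G be a finite abelian p-group with G ≠ 0 and pG ≠ 0. Then the reduced simplicial homology of the order complex of proper nontrivial subgroups of G vanishes in every degree: H̃_q(C̃_•(P_G)) = 0 for all q ≥ −1. -/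
namespace OrderComplex

variable (V : Type) [Preorder V]

/-- The `q`-simplices of the order complex of `V`: strictly increasing chains
`v 0 < v 1 < ⋯ < v q` of elements of `V`. -/
def Simplex (q : ℕ) : Type _ := {f : Fin (q + 1) → V // StrictMono f}

/-- The group `C̃_q` of `q`-chains: the free abelian group on the `q`-simplices. -/
abbrev Chains (q : ℕ) : Type _ := Simplex V q →₀ ℤ

variable {V}

/-- The `i`-th face of a simplex, obtained by omitting its `i`-th vertex. -/
def face {q : ℕ} (s : Simplex V (q + 1)) (i : Fin (q + 2)) : Simplex V q :=
  ⟨s.1 ∘ i.succAbove, s.2.comp (Fin.strictMono_succAbove i)⟩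

variable (V)

/-- The simplicial boundary map `∂ : C̃_{q+1} → C̃_q`, the alternating sum of the face maps. -/
noncomputable def boundary (q : ℕ) : Chains V (q + 1) →ₗ[ℤ] Chains V q :=
  Finsupp.linearCombination ℤ fun s : Simplex V (q + 1) =>
    ∑ i : Fin (q + 2), ((-1 : ℤ) ^ (i : ℕ)) • Finsupp.single (face s i) 1

/-- The augmentation `C̃_0 → C̃_{-1} = ℤ`, sending each vertex to `1`. -/
noncomputable def augment : Chains V 0 →ₗ[ℤ] ℤ :=
  Finsupp.linearCombination ℤ fun _ : Simplex V 0 => (1 : ℤ)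

/-- The homology of the augmented chain complex
`⋯ → C̃_1 → C̃_0 → C̃_{-1} = ℤ → 0`, indexed so that `reducedHomology V n` is the homology
`H̃_{n-1}` at the term `C̃_{n-1}` (so `n = 0` corresponds to the term `ℤ` in degree `-1`).
Since no differential is available out of degree `-1`, homology in an ambient degree `q` is
`ker ∂ / (im ∂ ∩ ker ∂)`, which agrees with `ker ∂ / im ∂` since `∂ ∘ ∂ = 0`. -/
noncomputable def reducedHomology : ℕ → Type _
  | 0 => ℤ ⧸ LinearMap.range (augment V)
  | 1 => ↥(LinearMap.ker (augment V)) ⧸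
      Submodule.comap (LinearMap.ker (augment V)).subtype (LinearMap.range (boundary V 0))
  | (q + 2) => ↥(LinearMap.ker (boundary V q)) ⧸
      Submodule.comap (LinearMap.ker (boundary V q)).subtype
        (LinearMap.range (boundary V (q + 1)))

noncomputable instance : ∀ n, AddCommGroup (reducedHomology V n)
  | 0 => inferInstanceAs (AddCommGroup (ℤ ⧸ LinearMap.range (augment V)))
  | 1 => inferInstanceAs (AddCommGroup (↥(LinearMap.ker (augment V)) ⧸
      Submodule.comap (LinearMap.ker (augment V)).subtype (LinearMap.range (boundary V 0))))
  | (q + 2) => inferInstanceAs (AddCommGroup (↥(LinearMap.ker (boundary V q)) ⧸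
      Submodule.comap (LinearMap.ker (boundary V q)).subtype
        (LinearMap.range (boundary V (q + 1)))))

noncomputable instance : ∀ n, Module ℤ (reducedHomology V n)
  | 0 => inferInstanceAs (Module ℤ (ℤ ⧸ LinearMap.range (augment V)))
  | 1 => inferInstanceAs (Module ℤ (↥(LinearMap.ker (augment V)) ⧸
      Submodule.comap (LinearMap.ker (augment V)).subtype (LinearMap.range (boundary V 0))))
  | (q + 2) => inferInstanceAs (Module ℤ (↥(LinearMap.ker (boundary V q)) ⧸
      Submodule.comap (LinearMap.ker (boundary V q)).subtype
        (LinearMap.range (boundary V (q + 1)))))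

end OrderComplex

/-! The map `H ↦ H + pG` on proper nontrivial subgroups is monotone and satisfies
`H ≤ H + pG ≥ pG`; it never reaches `G`, because `H + pG = G` makes multiplication by `p`
surjective, hence injective, on the finite `p`-group `G / H`, so `G / H = 0`. Quillen's
conical contraction argument then applies: the prism operator is a chain homotopy from the
identity to `H ↦ H + pG`, and the cone with apex `pG` contracts the image of that map.

Prisms and cones produce degenerate simplices, so the homotopy is built on the complex of
all tuples of vertices and then normalized by discarding tuples that are not strictly
increasing. Normalization commutes with the boundary on monotone tuples (the two faces
at a repeated vertex cancel), and only monotone tuples ever occur. -/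

lemma Fin.monotone_cons {α : Type*} [Preorder α] {n : ℕ} {a : α} {u : Fin n → α}
    (ha : ∀ k, a ≤ u k) (hu : Monotone u) : Monotone (Fin.cons a u : Fin (n + 1) → α) :=
  monotone_iff_forall_lt.2 ((Fin.liftFun_cons (· ≤ ·)).2 ⟨ha, monotone_iff_forall_lt.1 hu⟩)

lemma Fin.comp_succAbove_castSucc_eq {α : Type*} {n : ℕ} {g : Fin (n + 2) → α}
    {k : Fin (n + 1)} (hk : g k.castSucc = g k.succ) :
    g ∘ k.castSucc.succAbove = g ∘ k.succ.succAbove := by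
  funext j
  rcases lt_trichotomy j k with h | rfl | h
  · simp [Fin.succAbove_castSucc_of_lt _ _ h, Fin.succAbove_succ_of_le _ _ h.le]
  · simp [hk]
  · simp [Fin.succAbove_castSucc_of_le _ _ h.le, Fin.succAbove_succ_of_lt _ _ h]

lemma Submodule.subsingleton_quotient_comap_subtype {R M : Type*} [Ring R] [AddCommGroup M]
    [Module R M] {K N : Submodule R M} (h : K ≤ N) : Subsingleton (K ⧸ N.comap K.subtype) := by
  rw [Submodule.Quotient.subsingleton_iff, Submodule.comap_subtype_eq_top]
  exact h

theorem AddSubgroup.eq_top_of_sup_range_nsmul_eq_top {G : Type*} [AddCommGroup G] [Finite G]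
    {p : ℕ} (hp : ∀ g : G, ∃ n : ℕ, p ^ n • g = 0) {H : AddSubgroup G}
    (hH : H ⊔ (nsmulAddMonoidHom p).range = ⊤) : H = ⊤ := by
  have hsurj : Function.Surjective fun q : G ⧸ H => p • q := by
    intro q
    obtain ⟨g, rfl⟩ := QuotientAddGroup.mk_surjective q
    obtain ⟨h, hh, _, ⟨y, rfl⟩, rfl⟩ := AddSubgroup.mem_sup.1 (hH ▸ AddSubgroup.mem_top g)
    exact ⟨(y : G ⧸ H), by simp [(QuotientAddGroup.eq_zero_iff h).2 hh]⟩
  have hinj := Finite.injective_iff_surjective.2 hsurj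
  have htors : ∀ n (q : G ⧸ H), p ^ n • q = 0 → q = 0 := by
    intro n
    induction n with
    | zero => simp
    | succ n ih => exact fun q hq => hinj (by simpa using ih _ (by rwa [← mul_smul, ← pow_succ]))
  refine eq_top_iff.2 fun g _ => (QuotientAddGroup.eq_zero_iff g).1 ?_
  obtain ⟨n, hn⟩ := hp g
  exact htors n _ (by rw [← QuotientAddGroup.mk_nsmul, hn, QuotientAddGroup.mk_zero])

namespace OrderComplex

open Finsupp

section OrderedChains

variable {V : Type*}

-- `OrdChains V n` is spanned by all `n`-tuples of vertices, so `OrdChains V (q + 1)` plays the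
-- role of `Chains V q`, and `OrdChains V 0 ≅ ℤ` that of the augmentation term.
variable (V) in
abbrev OrdChains (n : ℕ) : Type _ := (Fin n → V) →₀ ℤ

variable (V) in
noncomputable def ordBoundary (n : ℕ) : OrdChains V (n + 1) →ₗ[ℤ] OrdChains V n :=
  linearCombination ℤ fun g =>
    ∑ i : Fin (n + 1), ((-1 : ℤ) ^ (i : ℕ)) • single (g ∘ i.succAbove) 1

noncomputable def cone (v : V) (n : ℕ) : OrdChains V n →ₗ[ℤ] OrdChains V (n + 1) :=
  lmapDomain ℤ ℤ fun g : Fin n → V => (Fin.cons v g : Fin (n + 1) → V)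

noncomputable def pushforward (f : V → V) (n : ℕ) : OrdChains V n →ₗ[ℤ] OrdChains V n :=
  lmapDomain ℤ ℤ (f ∘ ·)

-- On `g = (g₀, …, gₙ₋₁)` this is `∑ᵢ (-1)ⁱ (g₀, …, gᵢ, f gᵢ, …, f gₙ₋₁)`, unfolded along
-- `g = g₀ ⬝ tail g`.
noncomputable def prism (f : V → V) : (n : ℕ) → OrdChains V n →ₗ[ℤ] OrdChains V (n + 1)
  | 0 => 0
  | n + 1 => linearCombination ℤ fun g =>
      cone (g 0) (n + 1) (single (f ∘ g) 1 - prism f n (single (Fin.tail g) 1))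

noncomputable def contraction (f : V → V) (c : V) (n : ℕ) :
    OrdChains V n →ₗ[ℤ] OrdChains V (n + 1) :=
  cone c n ∘ₗ pushforward f n - prism f n

@[simp] lemma ordBoundary_single {n : ℕ} (g : Fin (n + 1) → V) :
    ordBoundary V n (single g 1) =
      ∑ i : Fin (n + 1), ((-1 : ℤ) ^ (i : ℕ)) • single (g ∘ i.succAbove) 1 := by
  simp [ordBoundary]

@[simp] lemma cone_single (v : V) {n : ℕ} (g : Fin n → V) (b : ℤ) :
    cone v n (single g b) = single (Fin.cons v g) b := by
  simp [cone]

@[simp] lemma pushforward_single (f : V → V) {n : ℕ} (g : Fin n → V) (b : ℤ) :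
    pushforward f n (single g b) = single (f ∘ g) b := by
  simp [pushforward]

@[simp] lemma prism_zero_apply (f : V → V) (x : OrdChains V 0) : prism f 0 x = 0 := rfl

lemma prism_succ_single (f : V → V) {n : ℕ} (g : Fin (n + 1) → V) :
    prism f (n + 1) (single g 1) =
      cone (g 0) (n + 1) (single (f ∘ g) 1 - prism f n (single (Fin.tail g) 1)) := by
  simp [prism]

lemma cone_head_tail {n : ℕ} (g : Fin (n + 1) → V) :
    cone (g 0) n (single (Fin.tail g) 1) = single g 1 := by
  rw [cone_single, Fin.cons_self_tail]

lemma pushforward_zero (f : V → V) (x : OrdChains V 0) : pushforward f 0 x = x := by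
  rw [pushforward, lmapDomain_apply, Subsingleton.elim (f ∘ ·) id, mapDomain_id]

lemma ordBoundary_zero_cone (v : V) (x : OrdChains V 0) : ordBoundary V 0 (cone v 0 x) = x := by
  suffices ordBoundary V 0 ∘ₗ cone v 0 = LinearMap.id from LinearMap.congr_fun this x
  ext g
  simp [Subsingleton.elim _ g]

lemma ordBoundary_cone (v : V) {n : ℕ} (x : OrdChains V (n + 1)) :
    ordBoundary V (n + 1) (cone v (n + 1) x) = x - cone v n (ordBoundary V n x) := by
  suffices ordBoundary V (n + 1) ∘ₗ cone v (n + 1) = LinearMap.id - cone v n ∘ₗ ordBoundary V n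
    from LinearMap.congr_fun this x
  ext g
  simp [Fin.sum_univ_succ (n := n + 1), pow_succ, sub_eq_add_neg]
  rfl

lemma ordBoundary_pushforward (f : V → V) {n : ℕ} (x : OrdChains V (n + 1)) :
    ordBoundary V n (pushforward f (n + 1) x) = pushforward f n (ordBoundary V n x) := by
  suffices ordBoundary V n ∘ₗ pushforward f (n + 1) = pushforward f n ∘ₗ ordBoundary V n
    from LinearMap.congr_fun this x
  ext g
  simp
  rfl

lemma prism_cone (f : V → V) (v : V) {n : ℕ} (x : OrdChains V n) :
    prism f (n + 1) (cone v n x) =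
      cone v (n + 1) (pushforward f (n + 1) (cone v n x) - prism f n x) := by
  suffices prism f (n + 1) ∘ₗ cone v n =
      cone v (n + 1) ∘ₗ (pushforward f (n + 1) ∘ₗ cone v n - prism f n)
    from LinearMap.congr_fun this x
  ext g
  simp [prism_succ_single]

lemma OrdChains.ext_cone {M : Type*} [AddCommGroup M] [Module ℤ M] {n : ℕ}
    {φ ψ : OrdChains V (n + 1) →ₗ[ℤ] M} (h : ∀ v y, φ (cone v n y) = ψ (cone v n y)) :
    φ = ψ := by
  ext g
  simpa [cone_head_tail] using h (g 0) (single (Fin.tail g) 1)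

lemma ordBoundary_prism_cone_zero (f : V → V) (v : V) (y : OrdChains V 0) :
    ordBoundary V 1 (prism f 1 (cone v 0 y)) + prism f 0 (ordBoundary V 0 (cone v 0 y)) =
      pushforward f 1 (cone v 0 y) - cone v 0 y := by
  rw [prism_cone, prism_zero_apply, sub_zero, ordBoundary_cone, ordBoundary_pushforward,
    ordBoundary_zero_cone, pushforward_zero, prism_zero_apply, add_zero]

lemma ordBoundary_prism_cone (f : V → V) (v : V) {n : ℕ} (y : OrdChains V (n + 1))
    (hy : ordBoundary V (n + 1) (prism f (n + 1) y) + prism f n (ordBoundary V n y) =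
      pushforward f (n + 1) y - y) :
    ordBoundary V (n + 2) (prism f (n + 2) (cone v (n + 1) y)) +
        prism f (n + 1) (ordBoundary V (n + 1) (cone v (n + 1) y)) =
      pushforward f (n + 2) (cone v (n + 1) y) - cone v (n + 1) y := by
  simp only [prism_cone, ordBoundary_cone, map_sub, ordBoundary_pushforward, eq_sub_of_add_eq hy]
  abel

theorem ordBoundary_prism (f : V → V) (n : ℕ) (x : OrdChains V (n + 1)) :
    ordBoundary V (n + 1) (prism f (n + 1) x) + prism f n (ordBoundary V n x) =
      pushforward f (n + 1) x - x := by
  induction n with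
  | zero =>
    suffices ordBoundary V 1 ∘ₗ prism f 1 + prism f 0 ∘ₗ ordBoundary V 0 =
        pushforward f 1 - LinearMap.id from LinearMap.congr_fun this x
    exact OrdChains.ext_cone fun v y => ordBoundary_prism_cone_zero f v y
  | succ n ih =>
    suffices ordBoundary V (n + 2) ∘ₗ prism f (n + 2) + prism f (n + 1) ∘ₗ ordBoundary V (n + 1) =
        pushforward f (n + 2) - LinearMap.id from LinearMap.congr_fun this x
    exact OrdChains.ext_cone fun v y => ordBoundary_prism_cone f v y (ih y)

theorem ordBoundary_contraction (f : V → V) (c : V) (n : ℕ) (x : OrdChains V (n + 1)) :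
    ordBoundary V (n + 1) (contraction f c (n + 1) x) + contraction f c n (ordBoundary V n x) =
      x := by
  simp only [contraction, LinearMap.sub_apply, LinearMap.comp_apply, map_sub, ordBoundary_cone,
    ordBoundary_pushforward, eq_sub_of_add_eq (ordBoundary_prism f n x)]
  abel

end OrderedChains

section Preorder

variable {V : Type} [Preorder V]

open Classical in
noncomputable def normalize (n : ℕ) : OrdChains V (n + 1) →ₗ[ℤ] Chains V n :=
  linearCombination ℤ fun g => if h : StrictMono g then single (α := Simplex V n) ⟨g, h⟩ 1 else 0

noncomputable def toOrdChains (n : ℕ) : Chains V n →ₗ[ℤ] OrdChains V (n + 1) :=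
  lmapDomain ℤ ℤ fun s : Simplex V n => s.1

lemma normalize_single_of_strictMono {n : ℕ} {g : Fin (n + 1) → V} (h : StrictMono g) :
    normalize n (single g 1) = single (α := Simplex V n) ⟨g, h⟩ 1 := by
  rw [normalize, linearCombination_single, one_smul, dif_pos h]

lemma normalize_single_of_not_strictMono {n : ℕ} {g : Fin (n + 1) → V} (h : ¬StrictMono g) :
    normalize n (single g 1) = 0 := by
  simp [normalize, h]

@[simp] lemma toOrdChains_single {n : ℕ} (s : Simplex V n) (b : ℤ) :
    toOrdChains n (single s b) = single s.1 b := by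
  simp [toOrdChains]

lemma boundary_single {n : ℕ} (s : Simplex V (n + 1)) :
    boundary V n (single s 1) = ∑ i : Fin (n + 2), ((-1 : ℤ) ^ (i : ℕ)) • single (face s i) 1 := by
  simp [boundary]

lemma normalize_toOrdChains {n : ℕ} (x : Chains V n) : normalize n (toOrdChains n x) = x := by
  suffices normalize n ∘ₗ toOrdChains n = LinearMap.id from LinearMap.congr_fun this x
  ext s
  simp [normalize_single_of_strictMono s.2]
  rfl

lemma toOrdChains_boundary {n : ℕ} (x : Chains V (n + 1)) :
    toOrdChains n (boundary V n x) = ordBoundary V (n + 1) (toOrdChains (n + 1) x) := by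
  suffices toOrdChains n ∘ₗ boundary V n = ordBoundary V (n + 1) ∘ₗ toOrdChains (n + 1)
    from LinearMap.congr_fun this x
  ext s
  simp [boundary_single]
  rfl

lemma ordBoundary_toOrdChains_zero (x : Chains V 0) :
    ordBoundary V 0 (toOrdChains 0 x) = single isEmptyElim (augment V x) := by
  suffices ordBoundary V 0 ∘ₗ toOrdChains 0 =
      (lsingle isEmptyElim : ℤ →ₗ[ℤ] OrdChains V 0) ∘ₗ augment V from LinearMap.congr_fun this x
  ext s
  simp [augment, Subsingleton.elim _ (isEmptyElim : Fin 0 → V)]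

lemma not_strictMono_comp_succAbove {n : ℕ} {g : Fin (n + 2) → V} {k : Fin (n + 1)}
    (hk : g k.castSucc = g k.succ) {i : Fin (n + 2)} (h₁ : i ≠ k.castSucc) (h₂ : i ≠ k.succ) :
    ¬StrictMono (g ∘ i.succAbove) := by
  intro hmono
  obtain ⟨j₁, hj₁⟩ := Fin.exists_succAbove_eq h₁.symm
  obtain ⟨j₂, hj₂⟩ := Fin.exists_succAbove_eq h₂.symm
  have : j₁ = j₂ := hmono.injective (by simp [hj₁, hj₂, hk])
  exact k.castSucc_lt_succ.ne (by rw [← hj₁, ← hj₂, this])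

lemma normalize_ordBoundary_single_of_eq {n : ℕ} {g : Fin (n + 2) → V} {k : Fin (n + 1)}
    (hk : g k.castSucc = g k.succ) : normalize n (ordBoundary V (n + 1) (single g 1)) = 0 := by
  rw [ordBoundary_single, map_sum, Fintype.sum_eq_add k.castSucc k.succ k.castSucc_lt_succ.ne
    fun i hi => by rw [map_zsmul, normalize_single_of_not_strictMono
      (not_strictMono_comp_succAbove hk hi.1 hi.2), smul_zero]]
  simp [Fin.comp_succAbove_castSucc_eq hk, pow_succ]

def monotoneAbove (a : V) (n : ℕ) : Set (Fin n → V) := {u | Monotone u ∧ ∀ k, a ≤ u k}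

lemma cone_mem_supported {a v : V} (hav : a ≤ v) {n : ℕ} {y : OrdChains V n}
    (hy : y ∈ supported ℤ ℤ (monotoneAbove v n)) :
    cone v n y ∈ supported ℤ ℤ (monotoneAbove a (n + 1)) := by
  have hmap := Submodule.mem_map_of_mem (f := cone v n) hy
  rw [cone, lmapDomain_supported] at hmap
  refine supported_mono ?_ hmap
  rintro _ ⟨u, ⟨hu, hvu⟩, rfl⟩
  exact ⟨Fin.monotone_cons hvu hu, Fin.cases hav fun k => hav.trans (hvu k)⟩

lemma prism_single_mem_supported {f : V → V} (hf : Monotone f) (hle : ∀ x, x ≤ f x) {n : ℕ}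
    {a : V} {g : Fin n → V} (hg : g ∈ monotoneAbove a n) :
    prism f n (single g 1) ∈ supported ℤ ℤ (monotoneAbove a (n + 1)) := by
  induction n generalizing a with
  | zero => simp
  | succ n ih =>
    rw [prism_succ_single]
    refine cone_mem_supported (hg.2 0) (sub_mem (single_mem_supported ℤ _ ?_) (ih ?_))
    · exact ⟨hf.comp hg.1, fun k => (hg.1 (Fin.zero_le k)).trans (hle _)⟩
    · exact ⟨hg.1.comp Fin.strictMono_succ.monotone, fun k => hg.1 (Fin.zero_le _)⟩

lemma contraction_toOrdChains_mem_supported {f : V → V} {c : V} (hf : Monotone f)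
    (hle : ∀ x, x ≤ f x) (hc : ∀ x, c ≤ f x) {n : ℕ} (x : Chains V n) :
    contraction f c (n + 1) (toOrdChains n x) ∈ supported ℤ ℤ {u | Monotone u} := by
  induction x using Finsupp.induction_linear with
  | zero => simp
  | add x y hx hy => simpa only [map_add] using add_mem hx hy
  | single s b =>
    rw [← smul_single_one, map_zsmul, map_zsmul, toOrdChains_single, contraction,
      LinearMap.sub_apply, LinearMap.comp_apply, pushforward_single, cone_single]
    refine Submodule.smul_mem _ b (sub_mem ?_ ?_)
    · exact single_mem_supported ℤ _ (Fin.monotone_cons (fun k => hc _) (hf.comp s.2.monotone))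
    · exact supported_mono (fun u hu => hu.1)
        (prism_single_mem_supported hf hle ⟨s.2.monotone, fun k => s.2.monotone (Fin.zero_le k)⟩)

noncomputable def chainContraction (f : V → V) (c : V) (n : ℕ) :
    Chains V n →ₗ[ℤ] Chains V (n + 1) :=
  normalize (n + 1) ∘ₗ contraction f c (n + 1) ∘ₗ toOrdChains n

lemma augment_surjective (s : Simplex V 0) : Function.Surjective (augment V) :=
  fun z => ⟨single s z, by simp [augment]⟩

end Preorder

section PartialOrder

variable {V : Type} [PartialOrder V]

lemma exists_castSucc_eq_succ_of_not_strictMono {n : ℕ} {g : Fin (n + 2) → V} (hg : Monotone g)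
    (h : ¬StrictMono g) : ∃ k : Fin (n + 1), g k.castSucc = g k.succ := by
  by_contra! hne
  exact h (Fin.strictMono_iff_lt_succ.2 fun k => (hg k.castSucc_lt_succ.le).lt_of_ne (hne k))

lemma boundary_normalize_single {n : ℕ} {g : Fin (n + 2) → V} (hg : Monotone g) :
    boundary V n (normalize (n + 1) (single g 1)) =
      normalize n (ordBoundary V (n + 1) (single g 1)) := by
  by_cases h : StrictMono g
  · rw [normalize_single_of_strictMono h]
    erw [boundary_single]
    rw [ordBoundary_single, map_sum]
    refine Finset.sum_congr rfl fun i _ => ?_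
    rw [map_zsmul, normalize_single_of_strictMono (h.comp (Fin.strictMono_succAbove i))]
    rfl
  · obtain ⟨k, hk⟩ := exists_castSucc_eq_succ_of_not_strictMono hg h
    rw [normalize_single_of_not_strictMono h, map_zero, normalize_ordBoundary_single_of_eq hk]

lemma boundary_normalize {n : ℕ} {x : OrdChains V (n + 2)}
    (hx : x ∈ supported ℤ ℤ {g | Monotone g}) :
    boundary V n (normalize (n + 1) x) = normalize n (ordBoundary V (n + 1) x) := by
  rw [supported_eq_span_single] at hx
  induction hx using Submodule.span_induction with
  | mem _ h =>
    obtain ⟨g, hg, rfl⟩ := h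
    exact boundary_normalize_single hg
  | zero => simp
  | add x y _ _ hx hy => simp [hx, hy]
  | smul b x _ hx => simp [hx]

theorem boundary_chainContraction {f : V → V} {c : V} (hf : Monotone f) (hle : ∀ x, x ≤ f x)
    (hc : ∀ x, c ≤ f x) {n : ℕ} (x : Chains V (n + 1)) :
    boundary V (n + 1) (chainContraction f c (n + 1) x) + chainContraction f c n (boundary V n x) =
      x := by
  simp only [chainContraction, LinearMap.comp_apply,
    boundary_normalize (contraction_toOrdChains_mem_supported hf hle hc x), toOrdChains_boundary,
    ← map_add, ordBoundary_contraction, normalize_toOrdChains]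

theorem boundary_chainContraction_zero {f : V → V} {c : V} (hf : Monotone f)
    (hle : ∀ x, x ≤ f x) (hc : ∀ x, c ≤ f x) {x : Chains V 0} (hx : augment V x = 0) :
    boundary V 0 (chainContraction f c 0 x) = x := by
  have h := ordBoundary_contraction f c 0 (toOrdChains 0 x)
  rw [ordBoundary_toOrdChains_zero, hx, single_zero, map_zero, add_zero] at h
  simp only [chainContraction, LinearMap.comp_apply,
    boundary_normalize (contraction_toOrdChains_mem_supported hf hle hc x), h,
    normalize_toOrdChains]

theorem reducedHomology_subsingleton {f : V → V} {c : V}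
    (hf : Monotone f) (hle : ∀ x, x ≤ f x) (hc : ∀ x, c ≤ f x) :
    ∀ n, Subsingleton (reducedHomology V n)
  | 0 => by
    show Subsingleton (ℤ ⧸ LinearMap.range (augment V))
    rw [Submodule.Quotient.subsingleton_iff, LinearMap.range_eq_top]
    exact augment_surjective ⟨fun _ => c, Fin.strictMono_iff_lt_succ.2 fun k => k.elim0⟩
  | 1 => Submodule.subsingleton_quotient_comap_subtype fun x hx =>
    ⟨chainContraction f c 0 x, boundary_chainContraction_zero hf hle hc hx⟩
  | n + 2 => Submodule.subsingleton_quotient_comap_subtype fun x hx =>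
    ⟨chainContraction f c (n + 1) x, by
      simpa [LinearMap.mem_ker.1 hx] using boundary_chainContraction hf hle hc x⟩

end PartialOrder

theorem reducedHomology_proper_subsingleton_of_nongenerator {L : Type} [Lattice L]
    [BoundedOrder L] {c : L} (hc : c ≠ ⊥) (hgen : ∀ a, a ⊔ c = ⊤ → a = ⊤) (n : ℕ) :
    Subsingleton (reducedHomology {a : L // a ≠ ⊥ ∧ a ≠ ⊤} n) := by
  have hc_top : c ≠ ⊤ := fun h => hc (le_bot_iff.1 (le_top.trans (hgen ⊥ (by simp [h])).ge))
  exact reducedHomology_subsingleton (V := {a : L // a ≠ ⊥ ∧ a ≠ ⊤})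
    (f := fun a => ⟨a.1 ⊔ c, ne_bot_of_le_ne_bot hc le_sup_right, fun h => a.2.2 (hgen _ h)⟩)
    (c := ⟨c, hc, hc_top⟩) (fun _ _ h => Subtype.mk_le_mk.2 (sup_le_sup_right h c))
    (fun _ => Subtype.mk_le_mk.2 le_sup_left) (fun _ => Subtype.mk_le_mk.2 le_sup_right) n

end OrderComplex

open OrderComplex in
theorem stmt_2_general (p : ℕ) (G : Type) [AddCommGroup G] [Finite G]
    (hpgrp : ∀ g : G, ∃ n : ℕ, p ^ n • g = 0)
    (hpG : ∃ g : G, p • g ≠ 0) :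
    ∀ n : ℕ,
      Subsingleton (reducedHomology {H : AddSubgroup G // H ≠ ⊥ ∧ H ≠ ⊤} n) := by
  obtain ⟨g, hg⟩ := hpG
  have hpG_ne_bot : (nsmulAddMonoidHom p).range ≠ (⊥ : AddSubgroup G) := fun h => by
    have hmem : p • g ∈ (nsmulAddMonoidHom p).range := ⟨g, rfl⟩
    rw [h, AddSubgroup.mem_bot] at hmem
    exact hg hmem
  exact reducedHomology_proper_subsingleton_of_nongenerator hpG_ne_bot
    fun H hH => AddSubgroup.eq_top_of_sup_range_nsmul_eq_top hpgrp hH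

open OrderComplex in
/-- for a nonzero finite abelian `p`-group `G` with `pG ≠ 0`, all reduced
homology groups of the order complex of proper nontrivial subgroups of `G` vanish.
Here `reducedHomology V n` is the reduced homology `H̃_{n-1}` in degree `n - 1`, so `n`
ranges over all of `ℕ` exactly as the degree `q` ranges over all integers `≥ -1`. -/
theorem stmt_2 (p : ℕ) (hp : p.Prime) (G : Type) [AddCommGroup G] [Finite G]
    (hG : Nontrivial G) (hpgrp : ∀ g : G, ∃ n : ℕ, p ^ n • g = 0)
    (hpG : ∃ g : G, p • g ≠ 0) :
    ∀ n : ℕ,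
      Subsingleton (reducedHomology {H : AddSubgroup G // H ≠ ⊥ ∧ H ≠ ⊤} n) :=
  stmt_2_general p G hpgrp hpG
end

section
/- Let R be an integral domain, let m, n ≥ 1 be natural numbers, and let a, b, c ∈ R. If F_m(a,b) = 0 and F_n(b,c) = 0, then F_{mn}(a,c) = 0. -/
/-- `F m x y = ∏_{d·e = m} (x^d - y^e)`, the product over all ordered factorizations
`m = d·e` into positive integers, evaluated at elements `x y` of a commutative ring. -/
noncomputable def FPoly {R : Type*} [CommRing R] (m : ℕ) (x y : R) : R :=
  ∏ de ∈ Nat.divisorsAntidiagonal m, (x ^ de.1 - y ^ de.2)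

/-! In a domain, `F_m(a, b) = 0` says exactly that `a ^ d = b ^ e` for some factorization
`m = d * e`. Raising `a ^ d = b ^ e` to the power `d'` and `b ^ d' = c ^ e'` to the power `e`
gives `a ^ (d * d') = c ^ (e * e')`, and `(d * d', e * e')` is a factorization of `m * n`. -/

theorem pow_mul_eq_pow_mul_of_pow_eq_pow {M : Type*} [Monoid M] {x y z : M} {d e d' e' : ℕ}
    (hxy : x ^ d = y ^ e) (hyz : y ^ d' = z ^ e') : x ^ (d * d') = z ^ (e * e') := by
  rw [pow_mul, hxy, ← pow_mul, mul_comm e, pow_mul, hyz, ← pow_mul, mul_comm]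

theorem FPoly_eq_zero_iff {R : Type*} [CommRing R] [IsDomain R] {m : ℕ} {x y : R} :
    FPoly m x y = 0 ↔ ∃ de ∈ Nat.divisorsAntidiagonal m, x ^ de.1 = y ^ de.2 := by
  simp only [FPoly, Finset.prod_eq_zero_iff, sub_eq_zero]

theorem Nat.mul_mem_divisorsAntidiagonal {m n : ℕ} {p q : ℕ × ℕ}
    (hp : p ∈ Nat.divisorsAntidiagonal m) (hq : q ∈ Nat.divisorsAntidiagonal n) :
    p * q ∈ Nat.divisorsAntidiagonal (m * n) := by
  rw [Nat.mem_divisorsAntidiagonal] at *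
  exact ⟨by rw [Prod.fst_mul, Prod.snd_mul, ← hp.1, ← hq.1]; ring, mul_ne_zero hp.2 hq.2⟩

theorem stmt_7_general {R : Type*} [CommRing R] [IsDomain R] (m n : ℕ)
    (a b c : R) (h1 : FPoly m a b = 0) (h2 : FPoly n b c = 0) :
    FPoly (m * n) a c = 0 := by
  obtain ⟨p, hp, hab⟩ := FPoly_eq_zero_iff.mp h1
  obtain ⟨q, hq, hbc⟩ := FPoly_eq_zero_iff.mp h2
  exact FPoly_eq_zero_iff.mpr
    ⟨p * q, Nat.mul_mem_divisorsAntidiagonal hp hq, pow_mul_eq_pow_mul_of_pow_eq_pow hab hbc⟩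

theorem stmt_7 {R : Type*} [CommRing R] [IsDomain R] (m n : ℕ) (hm : 1 ≤ m) (hn : 1 ≤ n)
    (a b c : R) (h1 : FPoly m a b = 0) (h2 : FPoly n b c = 0) :
    FPoly (m * n) a c = 0 :=
  stmt_7_general m n a b c h1 h2
end

section
/- Let K be a field of characteristic 0, m ≥ 1, and let a ∈ K be an element which is neither 0 nor a root of unity (a ≠ 0 and a^k ≠ 1 for all k ≥ 1). Then the one-variable polynomial F_m(a, Y) ∈ K[Y] is squarefree; equivalently, the quotient ring K[Y]/(F_m(a,Y)) is reduced (and hence is isomorphic to a finite product of fields). -/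
/-!
Each factor `a^d - Y^e` of `F_m(a, Y)` is separable in characteristic `0` because `a ≠ 0`.
Two factors `a^d - Y^e` and `a^d' - Y^e'` with a common root `z` would give
`a^(d e') = z^(e e') = a^(d' e)`, so `d e' = d' e` since `a` has infinite order;
together with `d e = d' e' = m` this forces `(d, e) = (d', e')`. Hence distinct factors are
coprime, and a product of pairwise coprime separable polynomials is separable, so squarefree.
-/

theorem Nat.eq_of_mem_divisorsAntidiagonal_of_mul_eq {m : ℕ} {x y : ℕ × ℕ}
    (hx : x ∈ m.divisorsAntidiagonal) (hy : y ∈ m.divisorsAntidiagonal)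
    (h : x.1 * y.2 = y.1 * x.2) : x = y := by
  have hxm := (Nat.mem_divisorsAntidiagonal.mp hx).1
  have hym := (Nat.mem_divisorsAntidiagonal.mp hy).1
  have hx₂ := Nat.right_ne_zero_of_mem_divisorsAntidiagonal hx
  have hy₁ := Nat.left_ne_zero_of_mem_divisorsAntidiagonal hy
  have hy₂ := Nat.right_ne_zero_of_mem_divisorsAntidiagonal hy
  have hsq : x.1 * x.1 * (x.2 * y.2) = y.1 * y.1 * (x.2 * y.2) :=
    calc x.1 * x.1 * (x.2 * y.2) = (x.1 * x.2) * (x.1 * y.2) := by ring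
      _ = (y.1 * y.2) * (y.1 * x.2) := by rw [hxm, hym, h]
      _ = y.1 * y.1 * (x.2 * y.2) := by ring
  have h₁ : x.1 = y.1 := Nat.mul_self_inj.mp (Nat.eq_of_mul_eq_mul_right (by positivity) hsq)
  have h₂ : x.2 = y.2 :=
    Nat.eq_of_mul_eq_mul_left (Nat.pos_of_ne_zero hy₁) (by rw [hym, ← h₁, hxm])
  exact Prod.ext h₁ h₂

namespace Polynomial

variable {K : Type*} [Field K]

theorem separable_C_sub_X_pow {c : K} (hc : c ≠ 0) {n : ℕ} (hn : (n : K) ≠ 0) :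
    (C c - X ^ n).Separable := by
  rw [← neg_sub, neg_eq_neg_one_mul]
  exact (separable_X_pow_sub_C c hn hc).unit_mul isUnit_one.neg

theorem isCoprime_C_pow_sub_X_pow {a : K} (ha₀ : a ≠ 0) (ha : orderOf a = 0) {d e d' e' : ℕ}
    (h : d * e' ≠ d' * e) : IsCoprime (C a ^ d - X ^ e) (C a ^ d' - X ^ e') := by
  rw [isCoprime_iff_aeval_ne_zero_of_isAlgClosed K (AlgebraicClosure K)]
  intro z
  by_contra! hz
  simp only [map_sub, map_pow, aeval_C, aeval_X, sub_eq_zero] at hz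
  obtain ⟨hde, hde'⟩ := hz
  set b := Units.mk0 (algebraMap K (AlgebraicClosure K) a) ((_root_.map_ne_zero _).mpr ha₀)
  have hb : orderOf b = 0 := by
    rw [← orderOf_units, Units.val_mk0]
    exact (orderOf_injective (algebraMap K _).toMonoidHom (algebraMap K _).injective a).trans ha
  refine h ((pow_inj_iff_of_orderOf_eq_zero hb).mp (Units.ext ?_))
  simp only [b, Units.val_pow_eq_pow_val, Units.val_mk0]
  rw [pow_mul, hde, ← pow_mul, mul_comm e e', pow_mul, ← hde', ← pow_mul]

theorem separable_FPoly_C_X [CharZero K] (m : ℕ) {a : K} (ha₀ : a ≠ 0) (ha : orderOf a = 0) :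
    (FPoly m (C a) X).Separable := by
  refine separable_prod' (fun x hx y hy hxy ↦ isCoprime_C_pow_sub_X_pow ha₀ ha ?_) fun x hx ↦ ?_
  · exact fun h ↦ hxy (Nat.eq_of_mem_divisorsAntidiagonal_of_mul_eq hx hy h)
  · rw [← C_pow]
    exact separable_C_sub_X_pow (pow_ne_zero _ ha₀)
      (Nat.cast_ne_zero.mpr (Nat.right_ne_zero_of_mem_divisorsAntidiagonal hx))

end Polynomial

theorem stmt_8_general {K : Type*} [Field K] [CharZero K] (m : ℕ)
    (a : K) (ha : a ≠ 0) (ha' : ∀ k : ℕ, 1 ≤ k → a ^ k ≠ 1) :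
    Squarefree (FPoly m (Polynomial.C a) (Polynomial.X) : Polynomial K) ∧
      IsReduced (Polynomial K ⧸
        Ideal.span {(FPoly m (Polynomial.C a) (Polynomial.X) : Polynomial K)}) := by
  have hsq := (Polynomial.separable_FPoly_C_X m ha (orderOf_eq_zero_iff'.mpr ha')).squarefree
  refine ⟨hsq, ?_⟩
  rw [← Ideal.isRadical_iff_quotient_reduced, ← isRadical_iff_span_singleton]
  exact hsq.isRadical

theorem stmt_8 {K : Type*} [Field K] [CharZero K] (m : ℕ) (hm : 1 ≤ m)
    (a : K) (ha : a ≠ 0) (ha' : ∀ k : ℕ, 1 ≤ k → a ^ k ≠ 1) :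
    Squarefree (FPoly m (Polynomial.C a) (Polynomial.X) : Polynomial K) ∧
      IsReduced (Polynomial K ⧸
        Ideal.span {(FPoly m (Polynomial.C a) (Polynomial.X) : Polynomial K)}) :=
  stmt_8_general m a ha ha'
end

section
/- For all m, n ≥ 1, the quotient ring ℤ[x,y,z]/(F_m(x,y), F_n(y,z)) is reduced (has no nonzero nilpotent elements). -/
/-!
Since `F_n(y, z)` is monic in `y` and `F_m(x, y)` is monic in `x`, the quotient ring is the
tower `ℤ[z][y]/(F_n(y, z))[x]/(F_m(x, y))`; as adjoining a root of a monic polynomial preserves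
injective ring maps, this tower embeds into the same tower over `K = Frac ℤ[z]`. A monic
polynomial over a reduced ring has a reduced quotient as soon as it is squarefree over every
residue field. Over a field of characteristic zero, `F_N(x, t)` is squarefree when `t` is neither
zero nor a root of unity: the factors `x^d - t^e` are separable, and a common root of two of them
forces `d/e = d'/e'`, hence `(d, e) = (d', e')`. The element `z` has this property in every field
receiving `K`, and since `y^d = z^e` with `e ≠ 0` in every such field, so does `y`; this carries
the argument up the tower.
-/

open Polynomial Function

universe u

section FPoly

variable {R S : Type*} [CommRing R] [CommRing S]

theorem map_FPoly {F : Type*} [FunLike F R S] [RingHomClass F R S] (φ : F) (N : ℕ) (x y : R) :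
    φ (FPoly N x y) = FPoly N (φ x) (φ y) := by
  simp only [FPoly, map_prod, map_sub, map_pow]

theorem Polynomial.map_FPoly_X_C (φ : R →+* S) (N : ℕ) (a : R) :
    (FPoly N (X : R[X]) (C a)).map φ = FPoly N X (C (φ a)) := by
  rw [← coe_mapRingHom, map_FPoly, coe_mapRingHom, map_X, map_C]

theorem Polynomial.eval₂_FPoly_X_C (φ : R →+* S) (x : S) (N : ℕ) (a : R) :
    (FPoly N (X : R[X]) (C a)).eval₂ φ x = FPoly N x (φ a) := by
  rw [← coe_eval₂RingHom, map_FPoly, coe_eval₂RingHom, eval₂_X, eval₂_C]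

theorem Polynomial.monic_FPoly_X_C (N : ℕ) (a : R) : (FPoly N (X : R[X]) (C a)).Monic := by
  refine monic_prod_of_monic _ _ fun de hde => ?_
  rw [← map_pow]
  exact monic_X_pow_sub_C _ (Nat.left_ne_zero_of_mem_divisorsAntidiagonal hde)

theorem exists_pow_eq_pow_of_FPoly_eq_zero [IsDomain R] {N : ℕ} {x y : R}
    (h : FPoly N x y = 0) :
    ∃ de ∈ N.divisorsAntidiagonal, x ^ de.1 = y ^ de.2 := by
  obtain ⟨de, hde, h0⟩ := Finset.prod_eq_zero_iff.mp h
  exact ⟨de, hde, sub_eq_zero.mp h0⟩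

end FPoly

theorem pow_injective_of_pow_eq_pow {M : Type*} [Monoid M] {t u : M}
    (ht : Injective (t ^ · : ℕ → M)) {d e : ℕ} (he : e ≠ 0) (hut : u ^ d = t ^ e) :
    Injective (u ^ · : ℕ → M) := by
  intro a b (hab : u ^ a = u ^ b)
  refine Nat.eq_of_mul_eq_mul_left (Nat.pos_of_ne_zero he) (ht ?_)
  calc t ^ (e * a) = (u ^ a) ^ d := by rw [pow_mul, ← hut, ← pow_mul, ← pow_mul, mul_comm]
    _ = (u ^ b) ^ d := by rw [hab]
    _ = t ^ (e * b) := by rw [pow_mul, ← hut, ← pow_mul, ← pow_mul, mul_comm]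

theorem ne_zero_of_pow_injective {M₀ : Type*} [MonoidWithZero M₀] [Nontrivial M₀] {t : M₀}
    (ht : Injective (t ^ · : ℕ → M₀)) : t ≠ 0 := by
  rintro rfl
  exact absurd (ht (a₁ := 1) (a₂ := 2) (by simp)) (by decide)

theorem pow_injective_map {M N F : Type*} [Monoid M] [Monoid N] [FunLike F M N]
    [MonoidHomClass F M N] {f : F} (hf : Injective f) {t : M}
    (ht : Injective (t ^ · : ℕ → M)) : Injective (f t ^ · : ℕ → N) := by
  simpa only [comp_def, map_pow] using hf.comp ht

theorem Nat.eq_of_mem_divisorsAntidiagonal_of_mul_eq_mul {N : ℕ} {p q : ℕ × ℕ}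
    (hp : p ∈ N.divisorsAntidiagonal) (hq : q ∈ N.divisorsAntidiagonal)
    (h : p.2 * q.1 = q.2 * p.1) : p = q := by
  obtain ⟨hpN, -⟩ := Nat.mem_divisorsAntidiagonal.mp hp
  obtain ⟨hqN, -⟩ := Nat.mem_divisorsAntidiagonal.mp hq
  have hq2 := Nat.pos_of_ne_zero (Nat.right_ne_zero_of_mem_divisorsAntidiagonal hq)
  have hp1 := Nat.pos_of_ne_zero (Nat.left_ne_zero_of_mem_divisorsAntidiagonal hp)
  have h1 : p.1 = q.1 := by
    refine Nat.pow_left_injective two_ne_zero (Nat.eq_of_mul_eq_mul_left hq2 ?_)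
    calc q.2 * p.1 ^ 2 = p.1 * (p.2 * q.1) := by rw [h]; ring
      _ = q.2 * q.1 ^ 2 := by rw [← mul_assoc, hpN, ← hqN]; ring
  have h2 : p.2 = q.2 := Nat.eq_of_mul_eq_mul_left hp1 (by rw [hpN, h1, hqN])
  exact Prod.ext h1 h2

theorem Polynomial.isCoprime_X_pow_sub_C_pow {K : Type*} [Field K] {t : K}
    (ht : Injective (t ^ · : ℕ → K)) {N : ℕ} {p q : ℕ × ℕ}
    (hp : p ∈ N.divisorsAntidiagonal) (hq : q ∈ N.divisorsAntidiagonal) (hpq : p ≠ q) :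
    IsCoprime (X ^ p.1 - C (t ^ p.2)) (X ^ q.1 - C (t ^ q.2)) := by
  refine (isCoprime_iff_aeval_ne_zero _ _).mpr fun {A} _ _ _ u => ?_
  by_contra! hu
  simp only [map_sub, map_pow, aeval_X, aeval_C, sub_eq_zero] at hu
  have hs := pow_injective_map (algebraMap K A).injective ht
  refine hpq (Nat.eq_of_mem_divisorsAntidiagonal_of_mul_eq_mul hp hq (hs ?_))
  change _ ^ _ = _ ^ _
  rw [pow_mul, ← hu.1, ← pow_mul, mul_comm, pow_mul, hu.2, ← pow_mul]

theorem Polynomial.squarefree_FPoly_X_C {K : Type*} [Field K] [CharZero K] {t : K}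
    (ht : Injective (t ^ · : ℕ → K)) (N : ℕ) : Squarefree (FPoly N X (C t)) := by
  refine (separable_prod' (fun p hp q hq hpq => ?_) fun p hp => ?_).squarefree
  · simpa only [← map_pow] using isCoprime_X_pow_sub_C_pow ht hp hq hpq
  · rw [← map_pow]
    exact separable_X_pow_sub_C _
      (Nat.cast_ne_zero.mpr (Nat.left_ne_zero_of_mem_divisorsAntidiagonal hp))
      (pow_ne_zero _ (ne_zero_of_pow_injective ht))

theorem eq_zero_of_forall_ringHom_field {A : Type u} [CommRing A] [IsReduced A] {a : A}
    (h : ∀ (K : Type u) [Field K] (φ : A →+* K), φ a = 0) : a = 0 := by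
  suffices a ∈ nilradical A by
    rwa [nilradical_eq_zero, Submodule.zero_eq_bot, Ideal.mem_bot] at this
  rw [nilradical_eq_sInf, Ideal.mem_sInf]
  intro p (hp : p.IsPrime)
  rw [← Ideal.Quotient.eq_zero_iff_mem]
  refine IsFractionRing.injective (A ⧸ p) (FractionRing (A ⧸ p)) ?_
  rw [map_zero]
  exact h _ ((algebraMap _ _).comp (Ideal.Quotient.mk p))

theorem AdjoinRoot.isReduced_of_forall_squarefree_map {A : Type u} [CommRing A] [IsReduced A]
    {f : A[X]} (hf : f.Monic)
    (h : ∀ (K : Type u) [Field K] (φ : A →+* K), Squarefree (f.map φ)) :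
    IsReduced (AdjoinRoot f) := by
  refine ⟨fun x ⟨j, hj⟩ => ?_⟩
  obtain ⟨q, rfl⟩ := AdjoinRoot.mk_surjective x
  rw [← map_pow, AdjoinRoot.mk_eq_zero] at hj
  rw [AdjoinRoot.mk_eq_zero, ← modByMonic_eq_zero_iff_dvd hf]
  ext i
  refine eq_zero_of_forall_ringHom_field fun K _ φ => ?_
  have hdvd : f.map φ ∣ q.map φ :=
    (h K φ).isRadical j _ (by simpa only [Polynomial.map_pow] using Polynomial.map_dvd φ hj)
  have hrem : (q %ₘ f).map φ = 0 := by
    rwa [map_modByMonic φ hf, modByMonic_eq_zero_iff_dvd (hf.map φ)]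
  simpa using congr_arg (coeff · i) hrem

theorem AdjoinRoot.map_mk {R S : Type*} [CommRing R] [CommRing S] (φ : R →+* S) {f : R[X]}
    {g : S[X]} (h : g ∣ f.map φ) (p : R[X]) :
    AdjoinRoot.map φ f g h (AdjoinRoot.mk f p) = AdjoinRoot.mk g (p.map φ) := by
  rw [AdjoinRoot.map, AdjoinRoot.lift_mk, ← eval₂_map, ← AdjoinRoot.aeval_eq, aeval_def]
  rfl

theorem AdjoinRoot.map_injective_of_monic {R S : Type*} [CommRing R] [CommRing S] {f : R[X]}
    (hf : f.Monic) {φ : R →+* S} (hφ : Injective φ) {g : S[X]} (hg : f.map φ = g) :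
    Injective (AdjoinRoot.map φ f g hg.symm.dvd) := by
  subst hg
  refine (injective_iff_map_eq_zero _).mpr fun x hx => ?_
  obtain ⟨q, rfl⟩ := AdjoinRoot.mk_surjective x
  rw [AdjoinRoot.map_mk, AdjoinRoot.mk_eq_zero] at hx
  rw [AdjoinRoot.mk_eq_zero, ← modByMonic_eq_zero_iff_dvd hf]
  refine Polynomial.map_injective φ hφ ?_
  rwa [map_modByMonic φ hf, Polynomial.map_zero, modByMonic_eq_zero_iff_dvd (hf.map φ)]

section FAdjoin

variable {R S : Type*} [CommRing R] [CommRing S]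

abbrev FAdjoin (N : ℕ) (a : R) : Type _ := AdjoinRoot (FPoly N (X : R[X]) (C a))

noncomputable abbrev FAdjoin.root (N : ℕ) (a : R) : FAdjoin N a := AdjoinRoot.root _

theorem FAdjoin.FPoly_root_of (N : ℕ) (a : R) :
    FPoly N (FAdjoin.root N a) (AdjoinRoot.of _ a) = 0 := by
  rw [FAdjoin.root, ← AdjoinRoot.mk_X, ← AdjoinRoot.mk_C, ← map_FPoly, AdjoinRoot.mk_self]

noncomputable def FAdjoin.map (φ : R →+* S) (N : ℕ) (a : R) :
    FAdjoin N a →+* FAdjoin N (φ a) :=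
  AdjoinRoot.map φ _ _ (map_FPoly_X_C φ N a).symm.dvd

theorem FAdjoin.map_injective {φ : R →+* S} (hφ : Injective φ) (N : ℕ) (a : R) :
    Injective (FAdjoin.map φ N a) :=
  AdjoinRoot.map_injective_of_monic (monic_FPoly_X_C N a) hφ (map_FPoly_X_C φ N a)

noncomputable def FAdjoin.lift (φ : R →+* S) {N : ℕ} {a : R} (x : S)
    (hx : FPoly N x (φ a) = 0) : FAdjoin N a →+* S :=
  AdjoinRoot.lift φ x (by rwa [eval₂_FPoly_X_C])

theorem FAdjoin.lift_root (φ : R →+* S) {N : ℕ} {a : R} (x : S) (hx : FPoly N x (φ a) = 0) :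
    FAdjoin.lift φ x hx (FAdjoin.root N a) = x :=
  AdjoinRoot.lift_root _

theorem FAdjoin.lift_of (φ : R →+* S) {N : ℕ} {a : R} (x : S) (hx : FPoly N x (φ a) = 0)
    (r : R) : FAdjoin.lift φ x hx (AdjoinRoot.of _ r) = φ r :=
  AdjoinRoot.lift_of _

theorem FAdjoin.map_root (φ : R →+* S) (N : ℕ) (a : R) :
    FAdjoin.map φ N a (FAdjoin.root N a) = FAdjoin.root N (φ a) :=
  AdjoinRoot.map_root ..

end FAdjoin

/-- In every field receiving `a`, the image of `a` is neither zero nor a root of unity, and the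
field has characteristic zero; this is what makes `F_N(x, a)` squarefree over it. -/
def FieldwisePowInjective {A : Type u} [CommRing A] (a : A) : Prop :=
  ∀ (K : Type u) [Field K] (φ : A →+* K), CharZero K ∧ Injective (φ a ^ · : ℕ → K)

namespace FieldwisePowInjective

variable {A : Type u} [CommRing A] {a : A}

theorem of_field {K : Type u} [Field K] [CharZero K] {t : K} (ht : Injective (t ^ · : ℕ → K)) :
    FieldwisePowInjective t := fun _ _ φ =>
  ⟨(RingHom.charZero_iff φ.injective).mp inferInstance, pow_injective_map φ.injective ht⟩

theorem isReduced_FAdjoin [IsReduced A] (ha : FieldwisePowInjective a) (N : ℕ) :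
    IsReduced (FAdjoin N a) :=
  AdjoinRoot.isReduced_of_forall_squarefree_map (monic_FPoly_X_C N a) fun K _ φ => by
    obtain ⟨_, hφa⟩ := ha K φ
    rw [map_FPoly_X_C]
    exact squarefree_FPoly_X_C hφa N

theorem root (ha : FieldwisePowInjective a) (N : ℕ) :
    FieldwisePowInjective (FAdjoin.root N a) := by
  intro K _ φ
  obtain ⟨hK, hφa⟩ := ha K (φ.comp (AdjoinRoot.of _))
  refine ⟨hK, ?_⟩
  have := congr_arg φ (FAdjoin.FPoly_root_of N a)
  rw [map_FPoly, map_zero] at this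
  obtain ⟨de, hde, hpow⟩ := exists_pow_eq_pow_of_FPoly_eq_zero this
  exact pow_injective_of_pow_eq_pow hφa
    (Nat.right_ne_zero_of_mem_divisorsAntidiagonal hde) hpow

end FieldwisePowInjective

theorem isReduced_FAdjoin_of_injective {A A' : Type u} [CommRing A] [CommRing A'] [IsReduced A']
    {φ : A →+* A'} (hφ : Injective φ) {a : A} (ha : FieldwisePowInjective (φ a)) (N : ℕ) :
    IsReduced (FAdjoin N a) :=
  have := ha.isReduced_FAdjoin N
  isReduced_of_injective _ (FAdjoin.map_injective hφ N a)

section Presentation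

variable (m n : ℕ)

/-- `ℤ[z][y]/(F_n(y, z))[x]/(F_m(x, y))`, where `z` is the variable of `ℤ[X]`. -/
abbrev FTower : Type := FAdjoin m (FAdjoin.root n (X : ℤ[X]))

theorem isReduced_FTower : IsReduced (FTower m n) := by
  have hinj := IsFractionRing.injective ℤ[X] (FractionRing ℤ[X])
  have ht : FieldwisePowInjective (algebraMap ℤ[X] (FractionRing ℤ[X]) X) :=
    .of_field (pow_injective_map hinj (pow_injective_of_not_isUnit not_isUnit_X X_ne_zero))
  have := ht.isReduced_FAdjoin n
  refine isReduced_FAdjoin_of_injective (FAdjoin.map_injective hinj n X) ?_ m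
  rw [FAdjoin.map_root]
  exact ht.root n

noncomputable abbrev FIdeal : Ideal (MvPolynomial (Fin 3) ℤ) :=
  Ideal.span {FPoly m (MvPolynomial.X 0) (MvPolynomial.X 1),
    FPoly n (MvPolynomial.X 1) (MvPolynomial.X 2)}

noncomputable def toFTower : MvPolynomial (Fin 3) ℤ →+* FTower m n :=
  MvPolynomial.eval₂Hom (Int.castRingHom _)
    ![FAdjoin.root m _, AdjoinRoot.of _ (FAdjoin.root n X), AdjoinRoot.of _ (AdjoinRoot.of _ X)]

theorem toFTower_eq_zero_of_mem : ∀ P ∈ FIdeal m n, toFTower m n P = 0 := by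
  refine fun P hP => RingHom.mem_ker.mp ((Ideal.span_le.mpr ?_) hP)
  rintro _ (rfl | rfl) <;>
    simp only [SetLike.mem_coe, RingHom.mem_ker, map_FPoly, toFTower, MvPolynomial.eval₂Hom_X']
  · exact FAdjoin.FPoly_root_of m _
  · exact (map_FPoly (AdjoinRoot.of _) ..).symm.trans
      ((congr_arg _ (FAdjoin.FPoly_root_of n X)).trans (map_zero _))

theorem FPoly_mk_X_eq_zero {i j : Fin 3} {N : ℕ}
    (h : FPoly N (MvPolynomial.X i) (MvPolynomial.X j) ∈ FIdeal m n) :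
    FPoly N (Ideal.Quotient.mk (FIdeal m n) (MvPolynomial.X i))
      (Ideal.Quotient.mk (FIdeal m n) (MvPolynomial.X j)) = 0 := by
  rwa [← map_FPoly, Ideal.Quotient.eq_zero_iff_mem]

noncomputable def ofFTower : FTower m n →+* MvPolynomial (Fin 3) ℤ ⧸ FIdeal m n :=
  FAdjoin.lift
    (FAdjoin.lift (eval₂RingHom (Int.castRingHom _) (Ideal.Quotient.mk _ (MvPolynomial.X 2)))
      (Ideal.Quotient.mk _ (MvPolynomial.X 1))
      (by
        rw [coe_eval₂RingHom, eval₂_X]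
        exact FPoly_mk_X_eq_zero m n (Ideal.subset_span (by simp))))
    (Ideal.Quotient.mk _ (MvPolynomial.X 0))
    (by
      rw [FAdjoin.lift_root]
      exact FPoly_mk_X_eq_zero m n (Ideal.subset_span (by simp)))

theorem ofFTower_comp_toFTower : (ofFTower m n).comp (toFTower m n) = Ideal.Quotient.mk _ := by
  refine MvPolynomial.ringHom_ext (fun r => ?_) fun i => ?_
  · simp
  · fin_cases i <;> simp [ofFTower, toFTower, FAdjoin.lift_root, FAdjoin.lift_of]

end Presentation

open MvPolynomial in
theorem stmt_11_general (m n : ℕ) :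
    IsReduced (MvPolynomial (Fin 3) ℤ ⧸
      Ideal.span ({FPoly m (X 0) (X 1), FPoly n (X 1) (X 2)} :
        Set (MvPolynomial (Fin 3) ℤ))) := by
  have hinv : LeftInverse (ofFTower m n)
      (Ideal.Quotient.lift _ (toFTower m n) (toFTower_eq_zero_of_mem m n)) := by
    intro x
    obtain ⟨P, rfl⟩ := Ideal.Quotient.mk_surjective x
    rw [Ideal.Quotient.lift_mk, ← RingHom.comp_apply, ofFTower_comp_toFTower]
  have := isReduced_FTower m n
  exact isReduced_of_injective _ hinv.injective

open MvPolynomial in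
theorem stmt_11 (m n : ℕ) (hm : 1 ≤ m) (hn : 1 ≤ n) :
    IsReduced (MvPolynomial (Fin 3) ℤ ⧸
      Ideal.span ({FPoly m (X 0) (X 1), FPoly n (X 1) (X 2)} :
        Set (MvPolynomial (Fin 3) ℤ))) :=
  stmt_11_general m n
end

section
/- Let p be a prime and k = 𝔽_{p²}. Let f(x) = Σ_{i≥1} c_i x^i ∈ k⟦x⟧ with c_1 ≠ 0, and for s ≥ 0 write f^{(p^s)}(x) = Σ c_i^{p^s} x^i. Fix r ≥ 0 and set x₁' = f(x₁), x₂' = f^{(p^r)}(x₂) in k⟦x₁,x₂⟧. Then for each 0 ≤ i ≤ r, the element (x₁')^{p^i} − (x₂')^{p^{r−i}} equals (x₁^{p^i} − x₂^{p^{r−i}}) times a unit of k⟦x₁,x₂⟧; consequently F_{p^r}(x₁', x₂') and F_{p^r}(x₁, x₂) generate the same ideal of k⟦x₁,x₂⟧. -/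
/-!
In characteristic `p`, `f(x)^(p^i) = f^(p^i)(x^(p^i))`, and since `c^(p^2) = c` on `𝔽_{p²}`, also
`f^(p^r)(x₂)^(p^(r-i)) = f^(p^i)(x₂^(p^(r-i)))`. So with `g = f^(p^i)`, `a = x₁^(p^i)`,
`b = x₂^(p^(r-i))` the difference is `g(a) - g(b) = (a - b) · Σ c_(s+n+1) a^s b^n`, and the second
factor is a unit because its constant term is `c₁^(p^i) ≠ 0`. Multiplying over `i` gives the ideals.
-/

open PowerSeries

namespace PowerSeries

variable {R : Type*} [CommRing R]

noncomputable def divDiff (g : R⟦X⟧) : R⟦X⟧⟦X⟧ :=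
  mk fun n => mk fun s => coeff (s + n + 1) g

theorem C_sub_map_C_eq_mul_divDiff (g : R⟦X⟧) :
    C g - map C g = (C X - X) * divDiff g := by
  ext n s
  rcases n with _ | n <;> rcases s with _ | s <;>
    simp [divDiff, sub_mul, coeff_succ_X_mul, coeff_zero_X_mul, coeff_map,
      - coeff_zero_eq_constantCoeff]
  ring_nf

theorem isUnit_divDiff {g : R⟦X⟧} (hg : IsUnit (coeff 1 g)) : IsUnit (divDiff g) := by
  rw [isUnit_iff_constantCoeff, isUnit_iff_constantCoeff]
  simpa [divDiff, ← coeff_zero_eq_constantCoeff_apply] using hg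

theorem associated_C_expand_sub_map_C_expand {g : R⟦X⟧} (hg : IsUnit (coeff 1 g))
    {a b : ℕ} (ha : a ≠ 0) (hb : b ≠ 0) :
    Associated ((C X : R⟦X⟧⟦X⟧) ^ a - X ^ b) (C (expand a ha g) - map C (expand b hb g)) := by
  -- `x₁ ↦ x₁^a, x₂ ↦ x₂^b`, bundled as ring homs: as `AlgHom`s over `R⟦X⟧` the two instances
  -- `Algebra R⟦X⟧ R⟦X⟧⟦X⟧` would have to be unified, which fails at reducible transparency.
  let φ : R⟦X⟧⟦X⟧ →+* R⟦X⟧⟦X⟧ :=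
    (expand (R := R⟦X⟧) b hb : R⟦X⟧⟦X⟧ →+* R⟦X⟧⟦X⟧).comp
      (map (expand (R := R) a ha : R⟦X⟧ →+* R⟦X⟧))
  have hC : (expand (R := R) a ha : R⟦X⟧ →+* R⟦X⟧).comp C = C := RingHom.ext (expand_C a ha)
  have hφX : φ (C X - X) = C X ^ a - X ^ b := by
    simp [φ, expand_C]
  have hφ : φ (C g - map C g) = C (expand a ha g) - map C (expand b hb g) := by
    simp [φ, ← RingHom.comp_apply (map _) (map C), ← map_comp, hC, expand_C]
  rw [← hφX, ← hφ, C_sub_map_C_eq_mul_divDiff, map_mul]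
  exact associated_mul_unit_right _ _ ((isUnit_divDiff hg).map φ)

theorem pow_expChar_pow_eq_expand_map (p : ℕ) [ExpChar R p] (f : R⟦X⟧) (n : ℕ) :
    f ^ p ^ n =
      expand (p ^ n) (pow_ne_zero n (expChar_ne_zero R p)) (map (iterateFrobenius R p n) f) := by
  rw [← map_expand]
  exact (MvPowerSeries.map_iterateFrobenius_expand p (expChar_ne_zero R p) f n).symm

theorem associated_C_pow_sub_map_pow (p : ℕ) [ExpChar R p] {f : R⟦X⟧} (hf : IsUnit (coeff 1 f))
    {i j m : ℕ} (h : iterateFrobenius R p (j + m) = iterateFrobenius R p i) :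
    Associated ((C X : R⟦X⟧⟦X⟧) ^ p ^ i - X ^ p ^ j)
      (C f ^ p ^ i - map (C.comp (iterateFrobenius R p m)) f ^ p ^ j) := by
  have hp := expChar_ne_zero R p
  set g := map (iterateFrobenius R p i) f
  have hg : IsUnit (coeff 1 g) := by simpa [g, coeff_map] using hf.map (iterateFrobenius R p i)
  have hC : C f ^ p ^ i = C (expand (p ^ i) (pow_ne_zero i hp) g) := by
    rw [← map_pow, pow_expChar_pow_eq_expand_map p]
  have hmapC : map (C.comp (iterateFrobenius R p m)) f ^ p ^ j =
      map C (expand (p ^ j) (pow_ne_zero j hp) g) := by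
    rw [map_comp, RingHom.comp_apply, ← map_pow, pow_expChar_pow_eq_expand_map p,
      ← RingHom.comp_apply (map _), ← map_comp, ← iterateFrobenius_add, h]
  rw [hC, hmapC]
  exact associated_C_expand_sub_map_C_expand hg _ _

end PowerSeries

theorem iterateFrobenius_eq_of_modEq {K : Type*} [Field K] [Fintype K] {p : ℕ} [Fact p.Prime]
    [CharP K p] {d : ℕ} (hcard : Fintype.card K = p ^ d) {m n : ℕ} (h : m ≡ n [MOD d]) :
    iterateFrobenius K p m = iterateFrobenius K p n := by
  have hfrob := FiniteField.frobenius_pow hcard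
  rw [iterateFrobenius_eq_pow, iterateFrobenius_eq_pow, pow_eq_pow_mod m hfrob,
    pow_eq_pow_mod n hfrob, h]

theorem stmt_15_general (p : ℕ) [Fact p.Prime] (r : ℕ)
    (k : Type*) [Field k] [CharP k p] (hk : Nonempty (k ≃+* GaloisField p 2))
    (f : PowerSeries k)
    (hf1 : PowerSeries.coeff (R := k) 1 f ≠ 0) :
    -- x₁' = f(x₁) and x₂' = f^{(p^r)}(x₂) in k⟦x₁,x₂⟧ = k⟦x₁⟧⟦x₂⟧, where
    -- x₁ = C (X : k⟦x₁⟧) and x₂ is the outer variable X.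
    (∀ i : ℕ, i ≤ r →
      ∃ u : (PowerSeries (PowerSeries k))ˣ,
        (PowerSeries.C (R := PowerSeries k) f) ^ p ^ i -
            (PowerSeries.map ((PowerSeries.C (R := k)).comp (iterateFrobenius k p r)) f) ^
              p ^ (r - i) =
          ((PowerSeries.C (R := PowerSeries k) (PowerSeries.X : PowerSeries k)) ^ p ^ i -
              (PowerSeries.X : PowerSeries (PowerSeries k)) ^ p ^ (r - i)) * u) ∧
    Ideal.span {∏ i ∈ Finset.range (r + 1),
        ((PowerSeries.C (R := PowerSeries k) f) ^ p ^ i -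
          (PowerSeries.map ((PowerSeries.C (R := k)).comp (iterateFrobenius k p r)) f) ^
            p ^ (r - i))} =
      Ideal.span {∏ i ∈ Finset.range (r + 1),
        ((PowerSeries.C (R := PowerSeries k) (PowerSeries.X : PowerSeries k)) ^ p ^ i -
          (PowerSeries.X : PowerSeries (PowerSeries k)) ^ p ^ (r - i))} := by
  obtain ⟨e⟩ := hk
  have : Finite k := Finite.of_equiv _ e.symm.toEquiv
  have := Fintype.ofFinite k
  have hcard : Fintype.card k = p ^ 2 := by
    rw [← Nat.card_eq_fintype_card, Nat.card_congr e.toEquiv, GaloisField.card p 2 two_ne_zero]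
  have hassoc (i : ℕ) (hi : i ≤ r) :=
    associated_C_pow_sub_map_pow p (isUnit_iff_ne_zero.mpr hf1)
      (iterateFrobenius_eq_of_modEq hcard (m := r - i + r) (n := i) (by unfold Nat.ModEq; omega))
  refine ⟨fun i hi => ?_, ?_⟩
  · obtain ⟨u, hu⟩ := hassoc i hi
    exact ⟨u, hu.symm⟩
  · refine Ideal.span_singleton_eq_span_singleton.mpr (Associated.prod _ _ _ fun i hi => ?_).symm
    exact hassoc i (Nat.lt_succ_iff.mp (Finset.mem_range.mp hi))

theorem stmt_15 (p : ℕ) [Fact p.Prime] (r : ℕ)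
    (k : Type*) [Field k] [CharP k p] (hk : Nonempty (k ≃+* GaloisField p 2))
    (f : PowerSeries k)
    (hf0 : PowerSeries.constantCoeff (R := k) f = 0)
    (hf1 : PowerSeries.coeff (R := k) 1 f ≠ 0) :
    -- x₁' = f(x₁) and x₂' = f^{(p^r)}(x₂) in k⟦x₁,x₂⟧ = k⟦x₁⟧⟦x₂⟧, where
    -- x₁ = C (X : k⟦x₁⟧) and x₂ is the outer variable X.
    (∀ i : ℕ, i ≤ r →
      ∃ u : (PowerSeries (PowerSeries k))ˣ,
        (PowerSeries.C (R := PowerSeries k) f) ^ p ^ i -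
            (PowerSeries.map ((PowerSeries.C (R := k)).comp (iterateFrobenius k p r)) f) ^
              p ^ (r - i) =
          ((PowerSeries.C (R := PowerSeries k) (PowerSeries.X : PowerSeries k)) ^ p ^ i -
              (PowerSeries.X : PowerSeries (PowerSeries k)) ^ p ^ (r - i)) * u) ∧
    Ideal.span {∏ i ∈ Finset.range (r + 1),
        ((PowerSeries.C (R := PowerSeries k) f) ^ p ^ i -
          (PowerSeries.map ((PowerSeries.C (R := k)).comp (iterateFrobenius k p r)) f) ^
            p ^ (r - i))} =
      Ideal.span {∏ i ∈ Finset.range (r + 1),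
        ((PowerSeries.C (R := PowerSeries k) (PowerSeries.X : PowerSeries k)) ^ p ^ i -
          (PowerSeries.X : PowerSeries (PowerSeries k)) ^ p ^ (r - i))} :=
  stmt_15_general p r k hk f hf1
end

section
/- For every N ≥ 1, the number of subgroups H of (ℤ/N) × (ℤ/N) with |H| = N equals σ(N) = Σ_{d ∣ N} d, the sum of the divisors of N. (Equivalently, the number of subgroups of order N of (ℚ/ℤ)² is σ(N).) -/
/-!
A subgroup `H ≤ (ℤ/N)²` of order `N` is pinned down by `d = |π₁ H|` and the intersection
`H ∩ (0 × ℤ/N)`, of order `a = N / d`. Subgroups of the cyclic group `ℤ/N` are determined by their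
order, so `π₁ H = aℤ/N` and `H ∩ (0 × ℤ/N) = dℤ/N`; lifting `a` to some `(a, b) ∈ H` with
`0 ≤ b < d` shows that `H` is spanned by `(a, b)` and `(0, d)` (Hermite normal form), and distinct
`(d, b)` give distinct subgroups. Hence there are `∑_{d ∣ N} d` of them.
-/

open AddSubgroup

theorem AddSubgroup.card_map_fst_mul_card_comap_inr {A B : Type*} [AddGroup A] [AddGroup B]
    (H : AddSubgroup (A × B)) :
    Nat.card (H.map (AddMonoidHom.fst A B)) * Nat.card (H.comap (AddMonoidHom.inr A B)) =
      Nat.card H := by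
  set φ : H →+ A := (AddMonoidHom.fst A B).comp H.subtype
  have hrange : φ.range = H.map (AddMonoidHom.fst A B) := by
    rw [AddMonoidHom.range_comp, range_subtype]
  have hker : φ.ker ≃ H.comap (AddMonoidHom.inr A B) :=
    { toFun := fun x => ⟨x.1.1.2, by
        have hx : x.1.1 = (0, x.1.1.2) := Prod.ext x.2 rfl
        exact hx ▸ x.1.2⟩
      invFun := fun y => ⟨⟨(0, y), y.2⟩, rfl⟩
      left_inv := fun x => Subtype.ext <| Subtype.ext <| Prod.ext (x.2 : x.1.1.1 = 0).symm rfl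
      right_inv := fun _ => rfl }
  rw [← φ.ker.card_mul_index, index_ker, hrange, Nat.card_congr hker, mul_comm]

namespace ZMod

variable {N : ℕ}

theorem intCast_mem_zmultiples_natCast_iff {d : ℕ} (hd : d ∣ N) (x : ℤ) :
    (x : ZMod N) ∈ zmultiples (d : ZMod N) ↔ (d : ℤ) ∣ x := by
  constructor
  · rintro ⟨k, hk⟩
    have hN : (N : ℤ) ∣ k * d - x := by
      rw [← intCast_zmod_eq_zero_iff_dvd, Int.cast_sub, ← hk]
      push_cast
      rw [zsmul_eq_mul, sub_self]
    have hdk : (d : ℤ) ∣ k * d - x := (Int.natCast_dvd_natCast.mpr hd).trans hN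
    simpa using (dvd_sub_right (dvd_mul_left _ k)).mp hdk
  · rintro ⟨k, rfl⟩
    exact ⟨k, by push_cast; rw [zsmul_eq_mul, mul_comm]⟩

theorem card_zmultiples_natCast (hN : N ≠ 0) {a d : ℕ} (h : a * d = N) :
    Nat.card (zmultiples (a : ZMod N)) = d := by
  have ha : 0 < a := Nat.pos_of_ne_zero fun h0 => hN (by rw [← h, h0, zero_mul])
  rw [Nat.card_zmultiples, addOrderOf_coe a hN, Nat.gcd_eq_right (Dvd.intro d h), ← h,
    Nat.mul_div_cancel_left d ha]

theorem addSubgroup_eq_zmultiples (hN : N ≠ 0) {m c : ℕ} (h : m * c = N)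
    (K : AddSubgroup (ZMod N)) (hK : Nat.card K = m) : K = zmultiples (c : ZMod N) := by
  have : NeZero N := ⟨hN⟩
  have hm : (m : ℤ) ≠ 0 := by exact_mod_cast fun h0 => hN (by rw [← h, h0, zero_mul])
  have hle : K ≤ zmultiples (c : ZMod N) := by
    intro x hx
    obtain ⟨z, rfl⟩ := intCast_surjective x
    have hmz : (N : ℤ) ∣ m * z := by
      rw [← intCast_zmod_eq_zero_iff_dvd, Int.cast_mul, Int.cast_natCast, ← hK,
        ← nsmul_eq_mul]
      exact congrArg Subtype.val (card_nsmul_eq_zero' (x := (⟨_, hx⟩ : K)))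
    rw [← h, Nat.cast_mul, mul_dvd_mul_iff_left hm] at hmz
    exact (intCast_mem_zmultiples_natCast_iff (Dvd.intro_left m h) z).mpr hmz
  refine eq_of_le_of_card_ge hle ?_
  rw [card_zmultiples_natCast hN ((mul_comm c m).trans h), hK]

end ZMod

/-- The row span of the Hermite normal form `!![a, b; 0, d]`. -/
def hermiteSubgroup (N a b d : ℕ) : AddSubgroup (ZMod N × ZMod N) :=
  closure {((a : ZMod N), (b : ZMod N)), (0, (d : ZMod N))}

namespace hermiteSubgroup

variable {N a b d : ℕ}

theorem map_fst :
    (hermiteSubgroup N a b d).map (AddMonoidHom.fst _ _) = zmultiples (a : ZMod N) := by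
  rw [hermiteSubgroup, AddMonoidHom.map_closure, Set.image_pair, Set.pair_comm]
  simp [closure_insert_zero, zmultiples_eq_closure]

theorem comap_inr (hN : N ≠ 0) (h : a * d = N) :
    (hermiteSubgroup N a b d).comap (AddMonoidHom.inr _ _) = zmultiples (d : ZMod N) := by
  ext y
  rw [mem_comap, hermiteSubgroup, mem_closure_pair]
  constructor
  · rintro ⟨m, n, hmn⟩
    simp only [Prod.ext_iff, Prod.fst_add, Prod.snd_add, Prod.smul_fst, Prod.smul_snd,
      AddMonoidHom.inr_apply, smul_zero, add_zero] at hmn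
    obtain ⟨hfst, hsnd⟩ := hmn
    obtain ⟨u, rfl⟩ : (d : ℤ) ∣ m := by
      have hNm : (N : ℤ) ∣ m * a := by
        rw [← ZMod.intCast_zmod_eq_zero_iff_dvd]
        push_cast
        rwa [← zsmul_eq_mul]
      have ha : (a : ℤ) ≠ 0 := by exact_mod_cast fun h0 => hN (by rw [← h, h0, zero_mul])
      rwa [← h, Nat.cast_mul, mul_comm (a : ℤ), mul_dvd_mul_iff_right ha] at hNm
    refine ⟨u * b + n, ?_⟩
    rw [← hsnd]
    simp only [zsmul_eq_mul]
    push_cast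
    ring
  · rintro ⟨k, rfl⟩
    exact ⟨0, k, by simp⟩

theorem card (hN : N ≠ 0) (h : a * d = N) : Nat.card (hermiteSubgroup N a b d) = N := by
  rw [← card_map_fst_mul_card_comap_inr, map_fst, comap_inr hN h,
    ZMod.card_zmultiples_natCast hN h, ZMod.card_zmultiples_natCast hN ((mul_comm d a).trans h),
    mul_comm, h]

theorem inj (hN : N ≠ 0) {a' b' d' : ℕ} (h : a * d = N) (h' : a' * d' = N) (hb : b < d)
    (hb' : b' < d') (heq : hermiteSubgroup N a b d = hermiteSubgroup N a' b' d') :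
    d = d' ∧ b = b' := by
  obtain rfl : d = d' := by
    rw [← ZMod.card_zmultiples_natCast hN h, ← ZMod.card_zmultiples_natCast hN h', ← map_fst,
      heq, map_fst]
  obtain rfl : a = a' := Nat.eq_of_mul_eq_mul_right (by omega) (h.trans h'.symm)
  refine ⟨rfl, ?_⟩
  have hdiff : ((0 : ZMod N), ((b - b' : ℤ) : ZMod N)) ∈ hermiteSubgroup N a b' d := by
    have hmem : ∀ c : ℕ, ((a : ZMod N), (c : ZMod N)) ∈ hermiteSubgroup N a c d :=
      fun c => subset_closure (Set.mem_insert _ _)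
    convert sub_mem (heq ▸ hmem b) (hmem b') using 1
    simp
  rw [← AddMonoidHom.inr_apply, ← mem_comap, comap_inr hN h,
    ZMod.intCast_mem_zmultiples_natCast_iff (Dvd.intro_left a h), ← Int.modEq_iff_dvd,
    Int.natCast_modEq_iff] at hdiff
  exact hdiff.eq_of_lt_of_lt hb' hb |>.symm

end hermiteSubgroup

theorem exists_hermiteSubgroup_eq {N : ℕ} (hN : N ≠ 0) (H : AddSubgroup (ZMod N × ZMod N))
    (hH : Nat.card H = N) : ∃ a b d, a * d = N ∧ b < d ∧ hermiteSubgroup N a b d = H := by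
  set a := Nat.card (H.comap (AddMonoidHom.inr _ _))
  set d := Nat.card (H.map (AddMonoidHom.fst _ _))
  have hda : d * a = N := (card_map_fst_mul_card_comap_inr H).trans hH
  have had : a * d = N := (mul_comm a d).trans hda
  have hd : 0 < d := Nat.pos_of_ne_zero fun h0 => hN (by rw [← hda, h0, zero_mul])
  obtain ⟨p, hp, hpa⟩ : (a : ZMod N) ∈ H.map (AddMonoidHom.fst _ _) := by
    rw [ZMod.addSubgroup_eq_zmultiples hN hda _ rfl]
    exact mem_zmultiples _
  have hd_mem : ((0 : ZMod N), (d : ZMod N)) ∈ H := by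
    change (d : ZMod N) ∈ H.comap (AddMonoidHom.inr _ _)
    rw [ZMod.addSubgroup_eq_zmultiples hN had _ rfl]
    exact mem_zmultiples _
  have : NeZero N := ⟨hN⟩
  refine ⟨a, p.2.val % d, d, had, Nat.mod_lt _ hd, ?_⟩
  have hle : hermiteSubgroup N a (p.2.val % d) d ≤ H := by
    rw [hermiteSubgroup, closure_le, Set.insert_subset_iff, Set.singleton_subset_iff]
    refine ⟨?_, hd_mem⟩
    have hp' : ((a : ZMod N), ((p.2.val % d : ℕ) : ZMod N)) =
        p - (p.2.val / d : ℕ) • ((0 : ZMod N), (d : ZMod N)) := by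
      refine Prod.ext (by simpa using hpa.symm) ?_
      rw [Prod.snd_sub, eq_sub_iff_add_eq, Prod.smul_snd, nsmul_eq_mul, ← Nat.cast_mul,
        ← Nat.cast_add, Nat.mod_add_div', ZMod.natCast_zmod_val]
    rw [hp']
    exact sub_mem hp (nsmul_mem hd_mem _)
  exact eq_of_le_of_card_ge hle (by rw [hH, hermiteSubgroup.card hN had])

theorem stmt_17 (N : ℕ) (hN : 1 ≤ N) :
    Nat.card {H : AddSubgroup (ZMod N × ZMod N) // Nat.card H = N} =
      ∑ d ∈ Nat.divisors N, d := by
  have hN0 : N ≠ 0 := by omega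
  have hdiv {d : ℕ} (hd : d ∈ N.divisors) : N / d * d = N :=
    Nat.div_mul_cancel (Nat.dvd_of_mem_divisors hd)
  let f : (Σ d : N.divisors, Fin d) → {H : AddSubgroup (ZMod N × ZMod N) // Nat.card H = N} :=
    fun x => ⟨hermiteSubgroup N (N / x.1) x.2 x.1, hermiteSubgroup.card hN0 (hdiv x.1.2)⟩
  have hf : Function.Bijective f := by
    refine ⟨?_, ?_⟩
    · rintro ⟨⟨d, hd⟩, b⟩ ⟨⟨d', hd'⟩, b'⟩ h
      obtain ⟨rfl, hb⟩ := hermiteSubgroup.inj hN0 (hdiv hd) (hdiv hd') b.isLt b'.isLt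
        (congrArg Subtype.val h)
      obtain rfl := Fin.ext hb
      rfl
    · rintro ⟨H, hH⟩
      obtain ⟨a, b, d, had, hb, rfl⟩ := exists_hermiteSubgroup_eq hN0 H hH
      have hd : d ∈ N.divisors := Nat.mem_divisors.mpr ⟨Dvd.intro_left a had, hN0⟩
      have ha : N / d = a := Nat.div_eq_of_eq_mul_left (Nat.pos_of_mem_divisors hd) had.symm
      exact ⟨⟨⟨d, hd⟩, ⟨b, hb⟩⟩, Subtype.ext (by simp [f, ha])⟩
  rw [← Nat.card_eq_of_bijective f hf, Nat.card_eq_fintype_card, Fintype.card_sigma]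
  simp_rw [Fintype.card_fin]
  exact Finset.sum_coe_sort N.divisors id
end
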